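/- arXiv:math-ph/9910001 — 9 statements merged into one kernel-verified Lean document; each statement's English description precedes it below -/
import Mathlib

section
/- Let k ≥ 1 be an integer, let α ∈ (0, π), and let Ω be a compact subset of the open half-plane {γ ∈ ℂ : γ ≠ 0 and Im(γ·e^{−iα}) < 0} (equivalently −π + α < arg γ < α). Then there exist constants a > 0 and b > 0 such that for every smooth compactly supported u : ℝ → ℂ, every γ ∈ Ω and every real β with 0 < β ≤ 1: ∫_ℝ |u''(x)|² dx + |γ|²·∫_ℝ x⁴|u(x)|² dx + β²·∫_ℝ x^{4k+2}|u(x)|² dx ≤ a·∫_ℝ |−u''(x) + γx²u(x) + β e^{iα} x^{2k+1} u(x)|² dx + b·∫_ℝ |u(x)|² dx. -/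
open MeasureTheory
open scoped Real ContDiff

set_option maxHeartbeats 1000000

/-! Auxiliary constants -/

noncomputable def C0c (M δ : ℝ) : ℝ := (1 + M / δ) ^ 2 + M ^ 2 / δ ^ 2
noncomputable def rc (k : ℕ) (M δ s : ℝ) : ℝ := max (4 * (2 * k + 1 : ℝ) ^ 2 / δ * C0c M δ / s) 1
noncomputable def c4c (k : ℕ) (M δ s : ℝ) : ℝ :=
  4 * M ^ 2 / δ + (2 * k + 1 : ℝ) ^ 2 / δ * rc k M δ s ^ (2 * k - 1) + 1
noncomputable def aCc (k : ℕ) (M δ s : ℝ) : ℝ := 2 + (2 + C0c M δ) * (2 / s ^ 2)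
noncomputable def bCc (k : ℕ) (M δ s : ℝ) : ℝ := (2 + C0c M δ) * (2 * c4c k M δ s / s) + 1

lemma C0c_pos {M δ : ℝ} (hM : 0 < M) (hδ : 0 < δ) : 0 < C0c M δ := by
  unfold C0c; positivity

lemma rc_one (k : ℕ) (M δ s : ℝ) : 1 ≤ rc k M δ s := le_max_right _ _

lemma c4c_pos {M δ s : ℝ} (k : ℕ) (hM : 0 < M) (hδ : 0 < δ) : 0 < c4c k M δ s := by
  have h1 : (0:ℝ) < 4 * M ^ 2 / δ := by positivity
  have h2 : (0:ℝ) ≤ (2 * k + 1 : ℝ) ^ 2 / δ * rc k M δ s ^ (2 * k - 1) := by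
    have := rc_one k M δ s
    have : (0:ℝ) ≤ rc k M δ s ^ (2 * k - 1) := by positivity
    positivity
  unfold c4c; linarith

lemma aCc_pos {M δ s : ℝ} (k : ℕ) (hM : 0 < M) (hδ : 0 < δ) (hs : 0 < s) : 0 < aCc k M δ s := by
  have h1 := C0c_pos hM hδ
  have h2 : (0:ℝ) ≤ (2 + C0c M δ) * (2 / s ^ 2) := by positivity
  unfold aCc; linarith

lemma bCc_pos {M δ s : ℝ} (k : ℕ) (hM : 0 < M) (hδ : 0 < δ) (hs : 0 < s) : 0 < bCc k M δ s := by
  have h1 := C0c_pos hM hδ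
  have h3 := c4c_pos (s := s) k hM hδ
  have h2 : (0:ℝ) ≤ (2 + C0c M δ) * (2 * c4c k M δ s / s) := by positivity
  unfold bCc; linarith

lemma norm_sq_split {a b c : ℝ} (h1 : c ≤ a + b) (hc : 0 ≤ c) : c^2 ≤ 2*a^2 + 2*b^2 := by
  nlinarith [sq_nonneg (a - b), sq_nonneg (a + b)]

lemma amgm (t a b : ℝ) (ht : 0 < t) : a * b ≤ t * a ^ 2 + b ^ 2 / (4 * t) := by
  have h4 : (0:ℝ) < 4 * t := by linarith
  have key : (a * b - t * a ^ 2) * (4 * t) ≤ b ^ 2 := by nlinarith [sq_nonneg (2 * t * a - b)]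
  have h2 : a * b - t * a ^ 2 ≤ b ^ 2 / (4 * t) := by
    rw [← le_div_iff₀ h4] at key; exact key
  linarith

lemma interp (r : ℝ) (hr : 1 ≤ r) (n : ℕ) (x : ℝ) :
    (x ^ 2) ^ n ≤ (x ^ 2) ^ (n + 2) / r ^ 2 + r ^ n := by
  have hr0 : (0:ℝ) < r := lt_of_lt_of_le one_pos hr
  rcases le_or_gt (x ^ 2) r with h | h
  · have h1 : (x ^ 2) ^ n ≤ r ^ n := pow_le_pow_left₀ (sq_nonneg x) h n
    have h2 : (0:ℝ) ≤ (x ^ 2) ^ (n + 2) / r ^ 2 := by positivity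
    linarith
  · have h0 : (0:ℝ) ≤ x ^ 2 := sq_nonneg x
    have h1 : (x ^ 2) ^ n * r ^ 2 ≤ (x ^ 2) ^ (n + 2) := by
      have : r ^ 2 ≤ (x ^ 2) ^ 2 := by nlinarith
      calc (x ^ 2) ^ n * r ^ 2 ≤ (x ^ 2) ^ n * (x ^ 2) ^ 2 :=
            mul_le_mul_of_nonneg_left this (by positivity)
        _ = (x ^ 2) ^ (n + 2) := by ring
    have h2 : (x ^ 2) ^ n ≤ (x ^ 2) ^ (n + 2) / r ^ 2 := by
      rw [le_div_iff₀ (by positivity)]; exact h1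
    have : (0:ℝ) ≤ r ^ n := by positivity
    linarith

lemma mono_deriv (n : ℕ) (x : ℝ) :
    HasDerivAt (fun y : ℝ => (y : ℂ) ^ n) ((n : ℂ) * (x : ℂ) ^ (n - 1)) x :=
  (hasDerivAt_pow n (x : ℂ)).comp_ofReal

lemma integral_deriv_zero (F : ℝ → ℂ) (hF : ContDiff ℝ 1 F) (hs : HasCompactSupport F) :
    ∫ x : ℝ, deriv F x = 0 := by
  have hint : Integrable (deriv F) :=
    ((hF.continuous_deriv le_rfl).integrable_of_hasCompactSupport hs.deriv)
  rw [← intervalIntegral.integral_Iic_add_Ioi (b := (0:ℝ)) hint.integrableOn hint.integrableOn,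
    HasCompactSupport.integral_Iic_deriv_eq hF hs 0,
    HasCompactSupport.integral_Ioi_deriv_eq hF hs 0]
  ring


lemma pot_alg (M δ N x β : ℝ) (k : ℕ) (hδ : 0 < δ) (hM1 : 1 ≤ M) (hβ : 0 ≤ β)
    (hN : 0 ≤ N) (h1 : δ * x^2 ≤ N) (h2 : β * |x|^(2*k+1) ≤ (1 + M/δ) * N) :
    M^2 * (x^2)^2 + β^2 * (x^2)^(2*k+1) ≤ C0c M δ * N^2 := by
  have hM0 : (0:ℝ) < M := by linarith
  have e1 : (x^2)^(2*k+1) = (|x|^(2*k+1))^2 := by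
    rw [← sq_abs x, ← pow_mul, ← pow_mul]
    congr 1
    omega
  have hMx : M * x^2 ≤ M/δ * N := by
    have h := mul_le_mul_of_nonneg_left h1 (le_of_lt (div_pos hM0 hδ))
    calc M * x^2 = M/δ * (δ * x^2) := by field_simp
      _ ≤ M/δ * N := h
  have q3 : (M * x^2)^2 ≤ (M/δ * N)^2 :=
    pow_le_pow_left₀ (by positivity) hMx 2
  have q4 : (β * |x|^(2*k+1))^2 ≤ ((1 + M/δ) * N)^2 :=
    pow_le_pow_left₀ (by positivity) h2 2
  have e2 : M^2 * (x^2)^2 = (M * x^2)^2 := by ring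
  have e3 : β^2 * (x^2)^(2*k+1) = (β * |x|^(2*k+1))^2 := by rw [e1]; ring
  have e4 : C0c M δ * N^2 = (M/δ * N)^2 + ((1 + M/δ) * N)^2 := by
    unfold C0c; ring
  rw [e2, e3, e4]
  linarith

lemma mid_pointwise (k : ℕ) (hk : 1 ≤ k) (M δ s β x A B D : ℝ)
    (hδ0 : 0 < δ) (hs : 0 < s) (hβ0 : 0 < β) (hβ1 : β ≤ 1) (hM1 : 1 ≤ M)
    (hA : 0 ≤ A) (hB : 0 ≤ B) (hD : 0 ≤ D)
    (hpot : β^2 * (x^2)^(2*k+1) ≤ C0c M δ * D^2) :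
    (2*M* |x| + (2*(k:ℝ)+1)*β* |x|^(2*k)) * (A * B)
      ≤ (δ/2)*(x^2*B^2) + (s/4)*(D^2*A^2) + c4c k M δ s * A^2 := by
  have hr1 : 1 ≤ rc k M δ s := rc_one k M δ s
  set r := rc k M δ s with hrdef
  have hr0 : 0 < r := lt_of_lt_of_le one_pos hr1
  have hC0 : 0 < C0c M δ := C0c_pos (by linarith) hδ0
  have p1 : (2*M* |x|) * (A*B) ≤ (δ/4)*(x^2*B^2) + (4*M^2/δ)*A^2 := by
    have h := amgm (δ/4) (|x| *B) (2*M*A) (by linarith)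
    have e1 : (|x| *B)^2 = x^2*B^2 := by rw [mul_pow, sq_abs]
    have e2 : (2*M*A)^2/(4*(δ/4)) = 4*M^2/δ*A^2 := by
      field_simp; ring
    calc (2*M* |x|)*(A*B) = (|x| *B)*(2*M*A) := by ring
      _ ≤ (δ/4)*(|x| *B)^2 + (2*M*A)^2/(4*(δ/4)) := h
      _ = (δ/4)*(x^2*B^2) + 4*M^2/δ*A^2 := by rw [e1, e2]
  have hxsplit : |x|^(2*k) = |x| * |x|^(2*k-1) := by
    have he : 2*k = (2*k-1)+1 := by omega
    conv_lhs => rw [he]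
    rw [pow_succ, mul_comm]
  have hxsq : (|x|^(2*k-1))^2 = (x^2)^(2*k-1) := by
    rw [← pow_mul, mul_comm (2*k-1) 2, pow_mul, sq_abs]
  have p2 : ((2*(k:ℝ)+1)*β* |x|^(2*k)) * (A*B)
      ≤ (δ/4)*(x^2*B^2) + ((2*(k:ℝ)+1)^2/δ)*(β^2*(x^2)^(2*k-1))*A^2 := by
    have h := amgm (δ/4) (|x| *B) ((2*(k:ℝ)+1)*β* |x|^(2*k-1)*A) (by linarith)
    have e1 : (|x| *B)^2 = x^2*B^2 := by rw [mul_pow, sq_abs]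
    have e2 : ((2*(k:ℝ)+1)*β* |x|^(2*k-1)*A)^2/(4*(δ/4))
        = ((2*(k:ℝ)+1)^2/δ)*(β^2*(x^2)^(2*k-1))*A^2 := by
      rw [← hxsq]; field_simp
    calc ((2*(k:ℝ)+1)*β* |x|^(2*k))*(A*B)
        = (|x| *B)*((2*(k:ℝ)+1)*β* |x|^(2*k-1)*A) := by rw [hxsplit]; ring
      _ ≤ (δ/4)*(|x| *B)^2 + ((2*(k:ℝ)+1)*β* |x|^(2*k-1)*A)^2/(4*(δ/4)) := h
      _ = (δ/4)*(x^2*B^2) + ((2*(k:ℝ)+1)^2/δ)*(β^2*(x^2)^(2*k-1))*A^2 := by rw [e1, e2]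
  have hint := interp r hr1 (2*k-1) x
  have hexp : 2*k-1+2 = 2*k+1 := by omega
  rw [hexp] at hint
  have hr2 : 4*(2*(k:ℝ)+1)^2*C0c M δ ≤ s*(δ*r^2) := by
    have hq : 4*(2*(k:ℝ)+1)^2/δ*C0c M δ/s ≤ r := by
      rw [hrdef]; unfold rc; exact le_max_left _ _
    have hrr : r ≤ r^2 := by nlinarith
    have hq2 : 4*(2*(k:ℝ)+1)^2/δ*C0c M δ/s ≤ r^2 := le_trans hq hrr
    have e : δ*s*(4*(2*(k:ℝ)+1)^2/δ*C0c M δ/s) = 4*(2*(k:ℝ)+1)^2*C0c M δ := by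
      field_simp
    calc 4*(2*(k:ℝ)+1)^2*C0c M δ = δ*s*(4*(2*(k:ℝ)+1)^2/δ*C0c M δ/s) := e.symm
      _ ≤ δ*s*r^2 := mul_le_mul_of_nonneg_left hq2 (by positivity)
      _ = s*(δ*r^2) := by ring
  have l3 : (2*(k:ℝ)+1)^2/δ*(C0c M δ/r^2) ≤ s/4 := by
    rw [div_mul_div_comm, div_le_div_iff₀ (by positivity) (by norm_num)]
    nlinarith [hr2]
  have l1 : (2*(k:ℝ)+1)^2/δ*(β^2*(x^2)^(2*k+1)/r^2) ≤ (s/4)*D^2 := by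
    have hd : β^2*(x^2)^(2*k+1)/r^2 ≤ C0c M δ*D^2/r^2 := by gcongr
    calc (2*(k:ℝ)+1)^2/δ*(β^2*(x^2)^(2*k+1)/r^2)
        ≤ (2*(k:ℝ)+1)^2/δ*(C0c M δ*D^2/r^2) :=
          mul_le_mul_of_nonneg_left hd (by positivity)
      _ = ((2*(k:ℝ)+1)^2/δ*(C0c M δ/r^2))*D^2 := by ring
      _ ≤ (s/4)*D^2 := mul_le_mul_of_nonneg_right l3 (sq_nonneg D)
  have p3 : ((2*(k:ℝ)+1)^2/δ)*(β^2*(x^2)^(2*k-1))*A^2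
      ≤ (s/4)*(D^2*A^2) + ((2*(k:ℝ)+1)^2/δ*r^(2*k-1))*A^2 := by
    have q0 : (0:ℝ) ≤ (2*(k:ℝ)+1)^2/δ := by positivity
    have q1 : β^2*(x^2)^(2*k-1) ≤ β^2*(x^2)^(2*k+1)/r^2 + r^(2*k-1) := by
      have h1 := mul_le_mul_of_nonneg_left hint (by positivity : (0:ℝ) ≤ β^2)
      have h3 : β^2*r^(2*k-1) ≤ 1*r^(2*k-1) :=
        mul_le_mul_of_nonneg_right (by nlinarith) (by positivity)
      have e : β^2*((x^2)^(2*k+1)/r^2 + r^(2*k-1))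
          = β^2*(x^2)^(2*k+1)/r^2 + β^2*r^(2*k-1) := by ring
      rw [e] at h1
      linarith
    calc ((2*(k:ℝ)+1)^2/δ)*(β^2*(x^2)^(2*k-1))*A^2
        ≤ ((2*(k:ℝ)+1)^2/δ*(β^2*(x^2)^(2*k+1)/r^2 + r^(2*k-1)))*A^2 := by
          apply mul_le_mul_of_nonneg_right _ (sq_nonneg A)
          exact mul_le_mul_of_nonneg_left q1 q0
      _ = ((2*(k:ℝ)+1)^2/δ*(β^2*(x^2)^(2*k+1)/r^2))*A^2
          + ((2*(k:ℝ)+1)^2/δ*r^(2*k-1))*A^2 := by ring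
      _ ≤ ((s/4)*D^2)*A^2 + ((2*(k:ℝ)+1)^2/δ*r^(2*k-1))*A^2 := by
          have := mul_le_mul_of_nonneg_right l1 (sq_nonneg A)
          linarith
      _ = (s/4)*(D^2*A^2) + ((2*(k:ℝ)+1)^2/δ*r^(2*k-1))*A^2 := by ring
  have hc4 : 4*M^2/δ + (2*(k:ℝ)+1)^2/δ*r^(2*k-1) ≤ c4c k M δ s := by
    unfold c4c
    rw [← hrdef]
    push_cast
    linarith
  have hA2 : (0:ℝ) ≤ A^2 := sq_nonneg A
  have hc4' : (4*M^2/δ)*A^2 + ((2*(k:ℝ)+1)^2/δ*r^(2*k-1))*A^2 ≤ c4c k M δ s * A^2 := by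
    have h := mul_le_mul_of_nonneg_right hc4 hA2
    nlinarith [h]
  have e : (2*M* |x| + (2*(k:ℝ)+1)*β* |x|^(2*k))*(A*B)
      = (2*M* |x|)*(A*B) + ((2*(k:ℝ)+1)*β* |x|^(2*k))*(A*B) := by ring
  rw [e]
  linarith [p1, p2, p3, hc4']

theorem aux_estimate (k : ℕ) (hk : 1 ≤ k) (α : ℝ) (γ : ℂ) (β M δ : ℝ)
    (hβ0 : 0 < β) (hβ1 : β ≤ 1) (hδ0 : 0 < δ) (hγM : ‖γ‖ ≤ M) (hM1 : 1 ≤ M)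
    (hs : 0 < Real.sin α)
    (hδγle : δ ≤ -(γ * Complex.exp (-(Complex.I * α))).im)
    (u : ℝ → ℂ) (hu : ContDiff ℝ (⊤ : ℕ∞) u) (hsupp : HasCompactSupport u) :
    (∫ x : ℝ, ‖deriv (deriv u) x‖ ^ 2)
        + ‖γ‖ ^ 2 * (∫ x : ℝ, x ^ 4 * ‖u x‖ ^ 2)
        + β ^ 2 * (∫ x : ℝ, x ^ (4 * k + 2) * ‖u x‖ ^ 2)
      ≤ aCc k M δ (Real.sin α) * (∫ x : ℝ, ‖-(deriv (deriv u) x) + γ * (x : ℂ) ^ 2 * u x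
            + (β : ℂ) * Complex.exp (Complex.I * α) * (x : ℂ) ^ (2 * k + 1) * u x‖ ^ 2)
        + bCc k M δ (Real.sin α) * (∫ x : ℝ, ‖u x‖ ^ 2) := by
  classical
  set s := Real.sin α with hsdef
  set c : ℂ := Complex.exp (Complex.I * α) with hcdef
  have hconj : (starRingEnd ℂ) c = Complex.exp (-(Complex.I * α)) := by
    rw [hcdef, ← Complex.exp_conj]
    congr 1
    simp [map_mul, Complex.conj_I]
  have hc1 : c * (starRingEnd ℂ) c = 1 := by
    rw [hconj, hcdef, ← Complex.exp_add]; simp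
  have hc1' : (starRingEnd ℂ) c * c = 1 := by rw [mul_comm]; exact hc1
  have hcnorm : ‖c‖ = 1 := by
    rw [hcdef]
    simp [Complex.norm_exp]
  have hcim : c.im = s := by
    rw [hcdef, hsdef, mul_comm, Complex.exp_im]
    simp
  set δγ := -(γ * Complex.exp (-(Complex.I * α))).im with hδγdef
  have hδγim : (c * (starRingEnd ℂ) γ).im = δγ := by
    have h1 : c * (starRingEnd ℂ) γ = (starRingEnd ℂ) (γ * (starRingEnd ℂ) c) := by
      rw [map_mul, Complex.conj_conj]; ring
    rw [h1, hconj, Complex.conj_im]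
  set V : ℝ → ℂ := fun x => γ * (x:ℂ)^2 + ((β:ℂ) * c) * (x:ℂ)^(2*k+1) with hVdef
  set V' : ℝ → ℂ := fun x => γ * (2*(x:ℂ)) + ((β:ℂ) * c) * ((2*(k:ℂ)+1) * (x:ℂ)^(2*k)) with hV'def
  have hVd : ∀ x : ℝ, HasDerivAt V (V' x) x := by
    intro x
    have h2 : HasDerivAt (fun y:ℝ => (y:ℂ)^2) ((2:ℂ)*(x:ℂ)) x := by
      simpa using mono_deriv 2 x
    have h3 : HasDerivAt (fun y:ℝ => (y:ℂ)^(2*k+1)) ((2*(k:ℂ)+1) * (x:ℂ)^(2*k)) x := by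
      have := mono_deriv (2*k+1) x
      have he : 2*k+1-1 = 2*k := by omega
      rw [he] at this
      convert this using 2
      push_cast; ring
    exact (h2.const_mul γ).add (h3.const_mul ((β:ℂ)*c))
  have hrealCD : ContDiff ℝ ∞ (fun x : ℝ => (x:ℂ)) := Complex.ofRealCLM.contDiff
  have hVsm : ContDiff ℝ ∞ V := by
    rw [hVdef]
    exact (contDiff_const.mul (hrealCD.pow 2)).add (contDiff_const.mul (hrealCD.pow (2*k+1)))
  have hV'sm : ContDiff ℝ ∞ V' := by
    rw [hV'def]
    exact (contDiff_const.mul (contDiff_const.mul hrealCD)).add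
      (contDiff_const.mul (contDiff_const.mul (hrealCD.pow (2*k))))
  have hVc : Continuous V := hVsm.continuous
  have hV'c : Continuous V' := hV'sm.continuous
  set T : ℝ → ℂ := fun x => -(deriv (deriv u) x) + V x * u x with hTdef
  -- smoothness of u
  have huinf : ContDiff ℝ ∞ u := hu.of_le (by simp)
  have hu' : ContDiff ℝ ∞ (deriv u) := (contDiff_infty_iff_deriv.mp huinf).2
  have hu'' : ContDiff ℝ ∞ (deriv (deriv u)) := (contDiff_infty_iff_deriv.mp hu').2
  have hud : ∀ x : ℝ, HasDerivAt u (deriv u x) x := fun x =>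
    ((hu.differentiable (by simp)) x).hasDerivAt
  have hcu : Continuous u := hu.continuous
  have hcu' : Continuous (deriv u) := hu'.continuous
  have hcu'' : Continuous (deriv (deriv u)) := hu''.continuous
  have hTc : Continuous T := by rw [hTdef]; fun_prop
  have hK : IsCompact (tsupport u) := hsupp
  have hvan : ∀ x ∉ tsupport u, u x = 0 := fun x hx => image_eq_zero_of_notMem_tsupport hx
  have hvan' : ∀ x ∉ tsupport u, deriv u x = 0 := by
    intro x hx
    by_contra h
    exact hx (support_deriv_subset (Function.mem_support.2 h))
  have htsub : tsupport (deriv u) ⊆ tsupport u := by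
    rw [← (isClosed_tsupport u).closure_eq]
    exact closure_mono support_deriv_subset
  have hvan'' : ∀ x ∉ tsupport u, deriv (deriv u) x = 0 := by
    intro x hx
    by_contra h
    exact hx (htsub (support_deriv_subset (Function.mem_support.2 h)))
  -- integrability helpers
  have hIcs : ∀ (f : ℝ → ℂ), Continuous f → (∀ x ∉ tsupport u, f x = 0) → Integrable f :=
    fun f hf h0 => hf.integrable_of_hasCompactSupport (HasCompactSupport.intro hK h0)
  have hIcsR : ∀ (f : ℝ → ℝ), Continuous f → (∀ x ∉ tsupport u, f x = 0) → Integrable f :=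
    fun f hf h0 => hf.integrable_of_hasCompactSupport (HasCompactSupport.intro hK h0)
  -- the integrals
  set J0 := ∫ x : ℝ, ‖deriv (deriv u) x‖ ^ 2 with hJ0
  set J1 := ∫ x : ℝ, x^2 * ‖deriv u x‖ ^ 2 with hJ1
  set J2 := ∫ x : ℝ, ‖V x‖^2 * ‖u x‖ ^ 2 with hJ2
  set J3 := ∫ x : ℝ, ‖T x‖ ^ 2 with hJ3
  set J4 := ∫ x : ℝ, ‖u x‖ ^ 2 with hJ4
  set J5 := ∫ x : ℝ, x^4 * ‖u x‖ ^ 2 with hJ5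
  set J6 := ∫ x : ℝ, x^(4*k+2) * ‖u x‖ ^ 2 with hJ6
  have hi1 : Integrable (fun x : ℝ => x^2 * ‖deriv u x‖ ^ 2) :=
    hIcsR _ (by fun_prop) (fun x hx => by simp [hvan' x hx])
  have hi2 : Integrable (fun x : ℝ => ‖V x‖^2 * ‖u x‖ ^ 2) :=
    hIcsR _ (by fun_prop) (fun x hx => by simp [hvan x hx])
  have hi3 : Integrable (fun x : ℝ => ‖T x‖ ^ 2) :=
    hIcsR _ (by fun_prop) (fun x hx => by simp [hTdef, hvan x hx, hvan'' x hx])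
  have hi4 : Integrable (fun x : ℝ => ‖u x‖ ^ 2) :=
    hIcsR _ (by fun_prop) (fun x hx => by simp [hvan x hx])
  have hi5 : Integrable (fun x : ℝ => x^4 * ‖u x‖ ^ 2) :=
    hIcsR _ (by fun_prop) (fun x hx => by simp [hvan x hx])
  have hi6 : Integrable (fun x : ℝ => x^(4*k+2) * ‖u x‖ ^ 2) :=
    hIcsR _ (by fun_prop) (fun x hx => by simp [hvan x hx])
  have hJ1n : 0 ≤ J1 := integral_nonneg (fun x => by positivity)
  have hJ2n : 0 ≤ J2 := integral_nonneg (fun x => by positivity)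
  have hJ3n : 0 ≤ J3 := integral_nonneg (fun x => by positivity)
  have hJ4n : 0 ≤ J4 := integral_nonneg (fun x => by positivity)
  -- the pointwise potential bound
  have hpot : ∀ x : ℝ, M^2 * (x^2)^2 + β^2 * (x^2)^(2*k+1) ≤ C0c M δ * (‖V x‖^2) := by
    intro x
    have hNn : (0:ℝ) ≤ ‖V x‖ := norm_nonneg _
    have lnorm : ‖(starRingEnd ℂ) c * V x‖ = ‖V x‖ := by
      rw [norm_mul, RCLike.norm_conj, hcnorm, one_mul]
    have hWx : (starRingEnd ℂ) c * V x
        = (γ * (starRingEnd ℂ) c) * ((x^2 : ℝ) : ℂ) + (((β * x^(2*k+1)) : ℝ) : ℂ) := by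
      simp only [hVdef]
      push_cast
      linear_combination ((β:ℂ) * (x:ℂ)^(2*k+1)) * hc1'
    have hγc : (γ * (starRingEnd ℂ) c).im = -δγ := by
      have e : γ * (starRingEnd ℂ) c = (starRingEnd ℂ) (c * (starRingEnd ℂ) γ) := by
        rw [map_mul, Complex.conj_conj]; ring
      rw [e, Complex.conj_im, hδγim]
    have him : ((starRingEnd ℂ) c * V x).im = -δγ * x^2 := by
      rw [hWx, Complex.add_im, Complex.ofReal_im, Complex.mul_im, Complex.ofReal_re,
        Complex.ofReal_im, hγc]
      ring
    have h1 : δ * x^2 ≤ ‖V x‖ := by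
      have labs : |((starRingEnd ℂ) c * V x).im| ≤ ‖(starRingEnd ℂ) c * V x‖ := by
        exact Complex.abs_im_le_norm _
      rw [lnorm] at labs
      have l2 : δγ * x^2 ≤ |((starRingEnd ℂ) c * V x).im| := by
        rw [him, show -δγ*x^2 = -(δγ*x^2) by ring, abs_neg]
        exact le_abs_self _
      have l4 : δ*x^2 ≤ δγ*x^2 := mul_le_mul_of_nonneg_right hδγle (sq_nonneg x)
      linarith
    have hre : ((starRingEnd ℂ) c * V x).re
        = (γ * (starRingEnd ℂ) c).re * x^2 + β * x^(2*k+1) := by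
      rw [hWx, Complex.add_re, Complex.ofReal_re, Complex.mul_re, Complex.ofReal_re,
        Complex.ofReal_im]
      ring
    have h2 : β * |x|^(2*k+1) ≤ (1 + M/δ) * ‖V x‖ := by
      have e : β * x^(2*k+1)
          = ((starRingEnd ℂ) c * V x).re - (γ * (starRingEnd ℂ) c).re * x^2 := by
        linarith [hre]
      have labs2 : |((starRingEnd ℂ) c * V x).re| ≤ ‖V x‖ := by
        have h := Complex.abs_re_le_norm ((starRingEnd ℂ) c * V x)
        rw [lnorm] at h
        exact h
      have lγre : |(γ * (starRingEnd ℂ) c).re| ≤ M := by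
        have h := Complex.abs_re_le_norm (γ * (starRingEnd ℂ) c)
        have e2 : ‖γ * (starRingEnd ℂ) c‖ = ‖γ‖ := by
          rw [norm_mul, RCLike.norm_conj, hcnorm, mul_one]
        rw [e2] at h
        linarith
      have habs : |β * x^(2*k+1)| ≤ ‖V x‖ + M * x^2 := by
        rw [e, sub_eq_add_neg]
        calc |((starRingEnd ℂ) c * V x).re + -((γ * (starRingEnd ℂ) c).re * x^2)|
            ≤ |((starRingEnd ℂ) c * V x).re| + |(-((γ * (starRingEnd ℂ) c).re * x^2))| :=
              abs_add_le _ _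
          _ ≤ ‖V x‖ + M * x^2 := by
              rw [abs_neg, abs_mul, abs_of_nonneg (sq_nonneg x)]
              have := mul_le_mul_of_nonneg_right lγre (sq_nonneg x)
              linarith
      have hMx2 : M * x^2 ≤ M/δ * ‖V x‖ := by
        have h := mul_le_mul_of_nonneg_left h1
          (le_of_lt (div_pos (by linarith : (0:ℝ) < M) hδ0))
        calc M * x^2 = M/δ * (δ * x^2) := by field_simp
          _ ≤ M/δ * ‖V x‖ := h
      have e2 : β * |x|^(2*k+1) = |β * x^(2*k+1)| := by
        rw [abs_mul, abs_of_pos hβ0, abs_pow]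
      rw [e2]
      calc |β * x^(2*k+1)| ≤ ‖V x‖ + M * x^2 := habs
        _ ≤ ‖V x‖ + M/δ * ‖V x‖ := by linarith
        _ = (1 + M/δ) * ‖V x‖ := by ring
    exact pot_alg M δ (‖V x‖) x β k hδ0 hM1 (le_of_lt hβ0) hNn h1 h2
  -- IBP
  set G1 : ℝ → ℂ := fun x => deriv (deriv u) x * star (V x * u x) with hG1def
  set G2 : ℝ → ℂ := fun x => deriv u x * star (V' x * u x + V x * deriv u x) with hG2def
  have hG1int : Integrable G1 :=
    hIcs _ (by rw [hG1def]; fun_prop) (fun x hx => by simp [hG1def, hvan x hx])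
  have hG2int : Integrable G2 :=
    hIcs _ (by rw [hG2def]; fun_prop) (fun x hx => by simp [hG2def, hvan' x hx])
  have hIBP : ∫ x : ℝ, G1 x = - ∫ x : ℝ, G2 x := by
    have hu'd : ∀ x : ℝ, HasDerivAt (deriv u) (deriv (deriv u) x) x := fun x =>
      ((hu'.differentiable (by simp)) x).hasDerivAt
    set F : ℝ → ℂ := fun x => deriv u x * star (V x * u x) with hFdef
    have hFd : ∀ x : ℝ, HasDerivAt F (G1 x + G2 x) x := by
      intro x
      have h1 : HasDerivAt (fun y => V y * u y) (V' x * u x + V x * deriv u x) x :=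
        (hVd x).mul (hud x)
      exact (hu'd x).mul h1.star
    have hstarCD : ContDiff ℝ ∞ (fun x : ℝ => star (V x * u x)) := by
      have h1 : ContDiff ℝ ∞ (fun x : ℝ => V x * u x) := hVsm.mul huinf
      exact ((Complex.conjCLE : ℂ ≃L[ℝ] ℂ).toContinuousLinearMap.contDiff.comp h1 :)
    have hF1 : ContDiff ℝ 1 F := by
      rw [hFdef]; exact (hu'.mul hstarCD).of_le (by exact_mod_cast le_top)
    have hFcs : HasCompactSupport F :=
      HasCompactSupport.intro hK (fun x hx => by simp [hFdef, hvan' x hx])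
    have h0 : ∫ x : ℝ, deriv F x = 0 := integral_deriv_zero F hF1 hFcs
    have hder : (fun x : ℝ => deriv F x) = fun x => G1 x + G2 x := funext fun x => (hFd x).deriv
    rw [hder] at h0
    rw [integral_add hG1int hG2int] at h0
    exact eq_neg_of_add_eq_zero_left h0
  -- main complex quantity
  set W : ℝ → ℂ := fun x => c * T x * star (V x * u x) with hWdef
  have hWint : Integrable W :=
    hIcs _ (by rw [hWdef]; fun_prop) (fun x hx => by simp [hWdef, hvan x hx])
  set P : ℝ → ℂ := fun x => c * G2 x + c * ((V x * u x) * star (V x * u x)) with hPdef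
  have hPint : Integrable P :=
    hIcs _ (by rw [hPdef]; fun_prop) (fun x hx => by simp [hPdef, hG2def, hvan x hx, hvan' x hx])
  have hW2 : ∫ x : ℝ, W x = ∫ x : ℝ, P x := by
    have hVuint : Integrable (fun x : ℝ => (V x * u x) * star (V x * u x)) :=
      hIcs _ (by fun_prop) (fun x hx => by simp [hvan x hx])
    have e0 : ∫ x : ℝ, W x = ∫ x : ℝ, (c * -(G1 x) + c * ((V x * u x) * star (V x * u x))) := by
      apply integral_congr_ae
      filter_upwards with x
      simp only [hWdef, hTdef, hG1def]
      ring
    have e1 : ∫ x : ℝ, P x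
        = c * (∫ x : ℝ, G2 x) + c * ∫ x : ℝ, ((V x * u x) * star (V x * u x)) := by
      have hn3 : Integrable (fun x : ℝ => c * G2 x) := hG2int.const_mul c
      have hn2 : Integrable (fun x : ℝ => c * ((V x * u x) * star (V x * u x))) :=
        hVuint.const_mul c
      simp only [hPdef]
      rw [integral_add hn3 hn2, integral_const_mul, integral_const_mul]
    have hn0 : Integrable (fun x : ℝ => -(G1 x)) := hG1int.neg
    have hn1 : Integrable (fun x : ℝ => c * -(G1 x)) := hn0.const_mul c
    have hn2 : Integrable (fun x : ℝ => c * ((V x * u x) * star (V x * u x))) :=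
      hVuint.const_mul c
    have e2 : ∫ x : ℝ, (c * -(G1 x) + c * ((V x * u x) * star (V x * u x)))
        = (∫ x : ℝ, c * -(G1 x)) + ∫ x : ℝ, c * ((V x * u x) * star (V x * u x)) :=
      integral_add hn1 hn2
    have e3 : ∫ x : ℝ, c * -(G1 x) = c * ∫ x : ℝ, -(G1 x) := integral_const_mul _ _
    have e4 : ∫ x : ℝ, -(G1 x) = -∫ x : ℝ, G1 x := integral_neg _
    have e5 : ∫ x : ℝ, c * ((V x * u x) * star (V x * u x))
        = c * ∫ x : ℝ, ((V x * u x) * star (V x * u x)) := integral_const_mul _ _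
    rw [e0, e2, e3, e4, e5, hIBP, e1]
    ring
  -- imaginary parts
  set mid : ℝ → ℝ := fun x => (c * star (V' x) * star (u x) * deriv u x).im with hmiddef
  have hmidint : Integrable mid :=
    hIcsR _ (by rw [hmiddef]; fun_prop) (fun x hx => by simp [hmiddef, hvan x hx])
  have hptIm : ∀ x : ℝ, (P x).im
      = δγ * (x^2 * ‖deriv u x‖^2) + mid x + s * (‖V x‖^2 * ‖u x‖^2) := by
    intro x
    rw [← hδγim, ← hcim]
    simp only [hPdef, hG2def, hV'def, hVdef, hmiddef]
    have hx2 : ((x:ℂ))^2 = ((x^2 : ℝ) : ℂ) := by push_cast; ring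
    have hxk : ((x:ℂ))^(2*k+1) = ((x^(2*k+1) : ℝ) : ℂ) := by push_cast; ring
    have hxk2 : ((x:ℂ))^(2*k) = ((x^(2*k) : ℝ) : ℂ) := by push_cast; ring
    have hkc : (2*(k:ℂ)+1) = (((2*(k:ℝ)+1) : ℝ) : ℂ) := by push_cast; ring
    rw [hx2, hxk, hxk2, hkc]
    simp only [Complex.star_def, Complex.sq_norm, Complex.normSq_apply]
    simp only [Complex.add_im, Complex.add_re, Complex.mul_im, Complex.mul_re,
      Complex.conj_re, Complex.conj_im, Complex.ofReal_re, Complex.ofReal_im,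
      Complex.neg_im, Complex.neg_re]
    ring
  have hImks : ∫ x : ℝ, (W x).im = δγ * J1 + (∫ x : ℝ, mid x) + s * J2 := by
    have e1 : ∫ x : ℝ, (W x).im = ∫ x : ℝ, (P x).im := by
      have a1 := _root_.integral_im (μ := volume) hWint
      have a2 := _root_.integral_im (μ := volume) hPint
      simp only [RCLike.im_to_complex] at a1 a2
      rw [a1, a2, hW2]
    rw [e1]
    have e2 : ∫ x : ℝ, (P x).im
        = ∫ x : ℝ, (δγ * (x^2 * ‖deriv u x‖^2) + mid x + s * (‖V x‖^2 * ‖u x‖^2)) := by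
      exact integral_congr_ae (Filter.Eventually.of_forall hptIm)
    have hA : Integrable (fun x : ℝ => δγ * (x^2 * ‖deriv u x‖^2)) := hi1.const_mul δγ
    have hC : Integrable (fun x : ℝ => s * (‖V x‖^2 * ‖u x‖^2)) := hi2.const_mul s
    have hAB : Integrable (fun x : ℝ => δγ * (x^2 * ‖deriv u x‖^2) + mid x) := hA.add hmidint
    rw [e2, integral_add hAB hC, integral_add hA hmidint, integral_const_mul, integral_const_mul]
  -- upper bound for Im W
  have hWim_bound : ∫ x : ℝ, (W x).im ≤ (1/s) * J3 + (s/4) * J2 := by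
    have hWimint : Integrable (fun x : ℝ => (W x).im) := hWint.im
    have hptW : ∀ x : ℝ, (W x).im ≤ (1/s) * ‖T x‖^2 + (s/4) * (‖V x‖^2 * ‖u x‖^2) := by
      intro x
      have h1 : (W x).im ≤ ‖W x‖ := by
        calc (W x).im ≤ |(W x).im| := le_abs_self _
          _ ≤ ‖W x‖ := Complex.abs_im_le_norm _
      have h2 : ‖W x‖ = (‖V x‖ * ‖u x‖) * ‖T x‖ := by
        simp only [hWdef]
        rw [norm_mul, norm_mul, norm_star, norm_mul, hcnorm]
        ring
      have h3 := amgm (s/4) (‖V x‖ * ‖u x‖) (‖T x‖) (by linarith)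
      have e5 : 4*(s/4) = s := by ring
      rw [e5] at h3
      calc (W x).im ≤ ‖W x‖ := h1
        _ = (‖V x‖ * ‖u x‖) * ‖T x‖ := h2
        _ ≤ s/4 * (‖V x‖ * ‖u x‖)^2 + ‖T x‖^2/s := h3
        _ = (1/s) * ‖T x‖^2 + (s/4) * (‖V x‖^2 * ‖u x‖^2) := by ring
    have hrint : Integrable (fun x : ℝ => (1/s) * ‖T x‖^2 + (s/4) * (‖V x‖^2 * ‖u x‖^2)) :=
      (hi3.const_mul _).add (hi2.const_mul _)
    calc ∫ x : ℝ, (W x).im ≤ ∫ x : ℝ, ((1/s) * ‖T x‖^2 + (s/4) * (‖V x‖^2 * ‖u x‖^2)) :=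
          integral_mono hWimint hrint hptW
      _ = (1/s) * J3 + (s/4) * J2 := by
          rw [integral_add (hi3.const_mul _) (hi2.const_mul _), integral_const_mul,
            integral_const_mul]
  -- bound for mid
  have hmid_bound : - (∫ x : ℝ, mid x) ≤ (δ/2) * J1 + (s/4) * J2
      + (c4c k M δ s) * J4 := by
    have hptm : ∀ x : ℝ, -(mid x) ≤ (δ/2)*(x^2*‖deriv u x‖^2) + (s/4)*(‖V x‖^2*‖u x‖^2)
        + c4c k M δ s * ‖u x‖^2 := by
      intro x
      have h1 : -(mid x) ≤ ‖V' x‖ * (‖u x‖ * ‖deriv u x‖) := by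
        have ha : |(c * star (V' x) * star (u x) * deriv u x).im|
            ≤ ‖c * star (V' x) * star (u x) * deriv u x‖ := by
          exact Complex.abs_im_le_norm _
        have hb : ‖c * star (V' x) * star (u x) * deriv u x‖
            = ‖V' x‖ * (‖u x‖ * ‖deriv u x‖) := by
          rw [norm_mul, norm_mul, norm_mul, norm_star, norm_star, hcnorm]; ring
        rw [hb] at ha
        have hc' : -(mid x) ≤ |(c * star (V' x) * star (u x) * deriv u x).im| := by
          simp only [hmiddef]
          exact neg_le_abs _
        linarith
      have t1 : ‖γ * (2*(x:ℂ))‖ ≤ 2*M* |x| := by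
        have e : ‖γ * (2*(x:ℂ))‖ = ‖γ‖ * (2 * |x|) := by
          rw [norm_mul, show (2*(x:ℂ)) = ((2*x:ℝ):ℂ) by push_cast; ring,
            Complex.norm_real, Real.norm_eq_abs, abs_mul, abs_two]
        rw [e]
        nlinarith [abs_nonneg x, norm_nonneg γ, hγM]
      have t2 : ‖((β:ℂ) * c) * ((2*(k:ℂ)+1) * (x:ℂ)^(2*k))‖
          = (2*(k:ℝ)+1)*β* |x|^(2*k) := by
        have e : ((β:ℂ) * c) * ((2*(k:ℂ)+1) * (x:ℂ)^(2*k))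
            = c * (((β*((2*(k:ℝ)+1) * x^(2*k))) : ℝ) : ℂ) := by
          push_cast; ring
        rw [e, norm_mul, hcnorm, Complex.norm_real, Real.norm_eq_abs, one_mul, abs_mul, abs_mul,
          abs_of_pos hβ0, abs_of_nonneg (by positivity : (0:ℝ) ≤ 2*(k:ℝ)+1), abs_pow]
        ring
      have h2 : ‖V' x‖ ≤ 2*M* |x| + (2*(k:ℝ)+1)*β* |x|^(2*k) := by
        simp only [hV'def]
        calc ‖γ * (2*(x:ℂ)) + ((β:ℂ) * c) * ((2*(k:ℂ)+1) * (x:ℂ)^(2*k))‖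
            ≤ ‖γ * (2*(x:ℂ))‖ + ‖((β:ℂ) * c) * ((2*(k:ℂ)+1) * (x:ℂ)^(2*k))‖ := norm_add_le _ _
          _ ≤ 2*M* |x| + (2*(k:ℝ)+1)*β* |x|^(2*k) := by rw [t2]; linarith
      have h3 := mid_pointwise k hk M δ s β x (‖u x‖) (‖deriv u x‖) (‖V x‖) hδ0 hs hβ0 hβ1
        hM1 (norm_nonneg _) (norm_nonneg _) (norm_nonneg _)
        (by nlinarith [hpot x, sq_nonneg (M*x^2)])
      have h4 : ‖V' x‖ * (‖u x‖ * ‖deriv u x‖)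
          ≤ (2*M* |x| + (2*(k:ℝ)+1)*β* |x|^(2*k)) * (‖u x‖ * ‖deriv u x‖) :=
        mul_le_mul_of_nonneg_right h2 (by positivity)
      linarith
    have hmbint : Integrable (fun x : ℝ => (δ/2)*(x^2*‖deriv u x‖^2)
        + (s/4)*(‖V x‖^2*‖u x‖^2) + c4c k M δ s * ‖u x‖^2) :=
      ((hi1.const_mul _).add (hi2.const_mul _)).add (hi4.const_mul _)
    have hm1 : ∫ x : ℝ, -(mid x) ≤ ∫ x : ℝ, ((δ/2)*(x^2*‖deriv u x‖^2)
        + (s/4)*(‖V x‖^2*‖u x‖^2) + c4c k M δ s * ‖u x‖^2) :=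
      integral_mono hmidint.neg hmbint hptm
    rw [integral_neg] at hm1
    calc -(∫ x : ℝ, mid x) ≤ ∫ x : ℝ, ((δ/2)*(x^2*‖deriv u x‖^2)
          + (s/4)*(‖V x‖^2*‖u x‖^2) + c4c k M δ s * ‖u x‖^2) := hm1
      _ = (δ/2)*J1 + (s/4)*J2 + c4c k M δ s * J4 := by
          have hq1 : Integrable (fun x : ℝ => (δ/2)*(x^2*‖deriv u x‖^2)) := hi1.const_mul _
          have hq2 : Integrable (fun x : ℝ => (s/4)*(‖V x‖^2*‖u x‖^2)) := hi2.const_mul _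
          have hq3 : Integrable (fun x : ℝ => c4c k M δ s * ‖u x‖^2) := hi4.const_mul _
          have hq12 : Integrable (fun x : ℝ => (δ/2)*(x^2*‖deriv u x‖^2)
              + (s/4)*(‖V x‖^2*‖u x‖^2)) := hq1.add hq2
          rw [integral_add hq12 hq3, integral_add hq1 hq2, integral_const_mul,
            integral_const_mul, integral_const_mul]
  -- combine: s/2 J2 ≤ 1/s J3 + c4 J4
  have hJ2b : s^2 * J2 ≤ 2 * J3 + 2 * (c4c k M δ s) * s * J4 := by
    have h1 : δγ * J1 + (∫ x : ℝ, mid x) + s * J2 ≤ (1/s) * J3 + (s/4) * J2 := by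
      rw [← hImks]; exact hWim_bound
    have h2 : δ ≤ δγ := hδγle
    have h3 : (δ/2) * J1 ≤ δγ * J1 := by nlinarith
    have h4 : (s/2) * J2 ≤ (1/s) * J3 + (c4c k M δ s) * J4 := by linarith
    have h5 := mul_le_mul_of_nonneg_left h4 (le_of_lt (by linarith : (0:ℝ) < 2*s))
    calc s^2 * J2 = 2*s * ((s/2) * J2) := by ring
      _ ≤ 2*s * ((1/s) * J3 + (c4c k M δ s) * J4) := h5
      _ = 2 * (s * (1/s)) * J3 + 2 * (c4c k M δ s) * s * J4 := by ring
      _ = 2 * J3 + 2 * (c4c k M δ s) * s * J4 := by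
          rw [mul_one_div, div_self (ne_of_gt hs), mul_one]
  have hJ2c : J2 ≤ 2/s^2 * J3 + 2 * (c4c k M δ s)/s * J4 := by
    have hs2 : (0:ℝ) < s^2 := by positivity
    have e : 2/s^2 * J3 + 2 * (c4c k M δ s)/s * J4 = (2 * J3 + 2 * (c4c k M δ s) * s * J4)/s^2 := by
      field_simp
    rw [e, le_div_iff₀ hs2]
    linarith [hJ2b]
  -- f1 : J0 ≤ 2 J3 + 2 J2
  have hf1 : J0 ≤ 2 * J3 + 2 * J2 := by
    have hpt : ∀ x : ℝ, ‖deriv (deriv u) x‖ ^ 2 ≤ 2 * ‖T x‖^2 + 2 * (‖V x‖^2 * ‖u x‖^2) := by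
      intro x
      have he : deriv (deriv u) x = V x * u x - T x := by rw [hTdef]; ring
      have h1 : ‖deriv (deriv u) x‖ ≤ ‖V x * u x‖ + ‖T x‖ := by
        rw [he]; exact norm_sub_le _ _
      have h3 : ‖V x * u x‖ = ‖V x‖ * ‖u x‖ := norm_mul _ _
      have h4 := norm_sq_split h1 (norm_nonneg _)
      calc ‖deriv (deriv u) x‖ ^ 2 ≤ 2*‖V x * u x‖^2 + 2*‖T x‖^2 := h4
        _ = 2 * ‖T x‖^2 + 2 * (‖V x‖^2 * ‖u x‖^2) := by rw [h3]; ring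
    have hint0 : Integrable (fun x : ℝ => ‖deriv (deriv u) x‖ ^ 2) :=
      hIcsR _ (by fun_prop) (fun x hx => by simp [hvan'' x hx])
    calc J0 ≤ ∫ x : ℝ, (2 * ‖T x‖^2 + 2 * (‖V x‖^2 * ‖u x‖^2)) := by
          exact integral_mono hint0 ((hi3.const_mul 2).add (hi2.const_mul 2)) hpt
      _ = 2 * J3 + 2 * J2 := by
          rw [integral_add (hi3.const_mul 2) (hi2.const_mul 2), integral_const_mul,
            integral_const_mul]
  -- f2 : weighted terms ≤ C0 * J2
  have hf2 : ‖γ‖^2 * J5 + β^2 * J6 ≤ C0c M δ * J2 := by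
    have hpt : ∀ x : ℝ, ‖γ‖^2 * (x^4 * ‖u x‖^2) + β^2 * (x^(4*k+2) * ‖u x‖^2)
        ≤ C0c M δ * (‖V x‖^2 * ‖u x‖^2) := by
      intro x
      have h1 : x^4 = (x^2)^2 := by ring
      have h2 : x^(4*k+2) = (x^2)^(2*k+1) := by
        rw [← pow_mul]
        congr 1
        omega
      have h3 : ‖γ‖^2 ≤ M^2 := by nlinarith [norm_nonneg γ]
      have h4 := hpot x
      have h5 : (0:ℝ) ≤ ‖u x‖^2 := by positivity
      have h6 : ‖γ‖^2 * (x^2)^2 + β^2 * (x^2)^(2*k+1) ≤ C0c M δ * ‖V x‖^2 := by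
        nlinarith [sq_nonneg x, pow_nonneg (sq_nonneg x) (2*k+1)]
      calc ‖γ‖^2 * (x^4 * ‖u x‖^2) + β^2 * (x^(4*k+2) * ‖u x‖^2)
          = (‖γ‖^2 * (x^2)^2 + β^2 * (x^2)^(2*k+1)) * ‖u x‖^2 := by rw [h1, h2]; ring
        _ ≤ (C0c M δ * ‖V x‖^2) * ‖u x‖^2 := mul_le_mul_of_nonneg_right h6 h5
        _ = C0c M δ * (‖V x‖^2 * ‖u x‖^2) := by ring
    have e1 : ‖γ‖^2 * J5 + β^2 * J6
        = ∫ x : ℝ, (‖γ‖^2 * (x^4 * ‖u x‖^2) + β^2 * (x^(4*k+2) * ‖u x‖^2)) := by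
      rw [integral_add (hi5.const_mul _) (hi6.const_mul _), integral_const_mul,
        integral_const_mul]
    rw [e1]
    calc ∫ x : ℝ, (‖γ‖^2 * (x^4 * ‖u x‖^2) + β^2 * (x^(4*k+2) * ‖u x‖^2))
        ≤ ∫ x : ℝ, C0c M δ * (‖V x‖^2 * ‖u x‖^2) := by
          exact integral_mono ((hi5.const_mul _).add (hi6.const_mul _)) (hi2.const_mul _) hpt
      _ = C0c M δ * J2 := integral_const_mul _ _
  -- final assembly
  have hgoal : J0 + ‖γ‖^2 * J5 + β^2 * J6
      ≤ aCc k M δ s * J3 + bCc k M δ s * J4 := by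
    have hC0 := C0c_pos (lt_of_lt_of_le one_pos hM1) hδ0
    have h7 : (2 + C0c M δ) * J2 ≤ (2 + C0c M δ) * (2/s^2 * J3 + 2 * (c4c k M δ s)/s * J4) :=
      mul_le_mul_of_nonneg_left hJ2c (by linarith)
    have ea : aCc k M δ s = 2 + (2 + C0c M δ) * (2/s^2) := rfl
    have eb : bCc k M δ s = (2 + C0c M δ) * (2 * c4c k M δ s/s) + 1 := rfl
    nlinarith [hf1, hf2, h7, hJ4n, hJ3n]
  -- convert the goal
  have hTgoal : (∫ x : ℝ, ‖-(deriv (deriv u) x) + γ * (x : ℂ) ^ 2 * u x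
      + (β : ℂ) * c * (x : ℂ) ^ (2 * k + 1) * u x‖ ^ 2) = J3 := by
    rw [hJ3]
    congr 1
    funext x
    congr 1
    have : -(deriv (deriv u) x) + γ * (x : ℂ) ^ 2 * u x
        + (β : ℂ) * c * (x : ℂ) ^ (2 * k + 1) * u x = T x := by
      rw [hTdef, hVdef]; ring
    rw [this]
  rw [hTgoal]
  exact hgoal


/-- **Lemma 2.3** (quadratic estimate for the odd anharmonic oscillator
`p² + γx² + βe^{iα}x^{2k+1}`). -/
theorem quadratic_estimate_odd_anharmonic
    (k : ℕ) (hk : 1 ≤ k) (α : ℝ) (hα : α ∈ Set.Ioo 0 π)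
    (Ω : Set ℂ) (hΩcompact : IsCompact Ω)
    (hΩ : Ω ⊆ {γ : ℂ | γ ≠ 0 ∧ (γ * Complex.exp (-(Complex.I * α))).im < 0}) :
    ∃ a > (0:ℝ), ∃ b > (0:ℝ),
      ∀ u : ℝ → ℂ, ContDiff ℝ (⊤ : ℕ∞) u → HasCompactSupport u →
      ∀ γ ∈ Ω, ∀ β : ℝ, 0 < β → β ≤ 1 →
        (∫ x : ℝ, ‖deriv (deriv u) x‖ ^ 2)
            + ‖γ‖ ^ 2 * (∫ x : ℝ, x ^ 4 * ‖u x‖ ^ 2)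
            + β ^ 2 * (∫ x : ℝ, x ^ (4 * k + 2) * ‖u x‖ ^ 2)
          ≤ a * (∫ x : ℝ, ‖-(deriv (deriv u) x) + γ * (x : ℂ) ^ 2 * u x
                + (β : ℂ) * Complex.exp (Complex.I * α) * (x : ℂ) ^ (2 * k + 1) * u x‖ ^ 2)
            + b * (∫ x : ℝ, ‖u x‖ ^ 2) := by
  obtain ⟨hα0, hαπ⟩ := hα
  have hsin : 0 < Real.sin α := Real.sin_pos_of_pos_of_lt_pi hα0 hαπ
  rcases Set.eq_empty_or_nonempty Ω with hΩe | hΩne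
  · exact ⟨1, one_pos, 1, one_pos, fun u _ _ γ hγ => by simp [hΩe] at hγ⟩
  obtain ⟨M₀, hM₀⟩ : ∃ C, ∀ x ∈ Ω, ‖x‖ ≤ C :=
    hΩcompact.exists_bound_of_continuousOn continuousOn_id
  set M := max M₀ 1 with hM
  have hM1 : 1 ≤ M := le_max_right _ _
  have hM0 : 0 < M := lt_of_lt_of_le one_pos hM1
  have hMb : ∀ γ ∈ Ω, ‖γ‖ ≤ M := fun γ hγ => (hM₀ γ hγ).trans (le_max_left _ _)
  have hcont : Continuous fun γ : ℂ => -(γ * Complex.exp (-(Complex.I * α))).im := by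
    fun_prop
  obtain ⟨γ₀, hγ₀Ω, hγ₀min⟩ := hΩcompact.exists_isMinOn hΩne hcont.continuousOn
  set δ := -(γ₀ * Complex.exp (-(Complex.I * ↑α))).im with hδdef
  have hδ0 : 0 < δ := by
    have := (hΩ hγ₀Ω).2
    simp only [hδdef]
    linarith
  have hδγ : ∀ γ ∈ Ω, δ ≤ -(γ * Complex.exp (-(Complex.I * α))).im := fun γ hγ => hγ₀min hγ
  refine ⟨aCc k M δ (Real.sin α), aCc_pos k hM0 hδ0 hsin,
    bCc k M δ (Real.sin α), bCc_pos k hM0 hδ0 hsin, ?_⟩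
  intro u hu hsupp γ hγ β hβ0 hβ1
  exact aux_estimate k hk α γ β M δ hβ0 hβ1 hδ0 (hMb γ hγ) hM1 hsin (hδγ γ hγ) u hu hsupp
end

section
/- Let k ≥ 1 be an integer, α ∈ (0, π), σ ∈ ℂ with Im σ < 0, and ρ ≥ 0 a real number. Then for every smooth compactly supported u : ℝ → ℂ: ‖e^{−iα}(−u'') + σ x² u + ρ x^{2k+1} u‖² ≥ (1 − |Re σ|/|σ|)·( ‖e^{−iα}(−u'') + ρ x^{2k+1} u‖² + |σ|²·‖x² u‖² ) + 2(Im σ)·|cos α|·( ‖u'‖² + ‖x u‖² ) + 2(Im σ)·(sin α)·‖u‖², where ‖·‖ denotes the L² norm on ℝ (note that the last two terms are nonpositive since Im σ < 0). -/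
open MeasureTheory
open scoped Real

private lemma hasDerivAt_coeC (x : ℝ) : HasDerivAt (fun y : ℝ => (y:ℂ)) 1 x := by
  have h := Complex.ofRealCLM.hasDerivAt (x := x)
  simp at h
  exact h

set_option maxHeartbeats 2000000 in
/-- The key quadratic-form inequality from the proof of Lemma 2.3, comparing
`e^{−iα}p² + σx² + ρx^{2k+1}` with its `σ = 0` part. -/
theorem quadratic_form_inequality_odd_anharmonic
    (k : ℕ) (hk : 1 ≤ k) (α : ℝ) (hα : α ∈ Set.Ioo 0 π)
    (σ : ℂ) (hσ : σ.im < 0) (ρ : ℝ) (hρ : 0 ≤ ρ)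
    (u : ℝ → ℂ) (hu : ContDiff ℝ (⊤ : ℕ∞) u) (hsupp : HasCompactSupport u) :
    (1 - |σ.re| / ‖σ‖) *
        ((∫ x : ℝ, ‖Complex.exp (-(Complex.I * α)) * (-(deriv (deriv u) x))
              + (ρ : ℂ) * (x : ℂ) ^ (2 * k + 1) * u x‖ ^ 2)
          + ‖σ‖ ^ 2 * (∫ x : ℝ, ‖(x : ℂ) ^ 2 * u x‖ ^ 2))
      + 2 * σ.im * |Real.cos α| *
          ((∫ x : ℝ, ‖deriv u x‖ ^ 2) + (∫ x : ℝ, ‖(x : ℂ) * u x‖ ^ 2))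
      + 2 * σ.im * Real.sin α * (∫ x : ℝ, ‖u x‖ ^ 2)
    ≤ ∫ x : ℝ, ‖Complex.exp (-(Complex.I * α)) * (-(deriv (deriv u) x))
        + σ * (x : ℂ) ^ 2 * u x + (ρ : ℂ) * (x : ℂ) ^ (2 * k + 1) * u x‖ ^ 2 := by
  obtain ⟨hα0, hαπ⟩ := hα
  have hsin : 0 ≤ Real.sin α := Real.sin_nonneg_of_nonneg_of_le_pi hα0.le hαπ.le
  -- smoothness infrastructure
  have hu' : ContDiff ℝ (⊤:ℕ∞) u := hu.of_le (by simp)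
  have hucont : Continuous u := hu.continuous
  have hudiff : Differentiable ℝ u := hu'.differentiable (by simp)
  have hu1 : ContDiff ℝ (⊤:ℕ∞) (deriv u) := (contDiff_infty_iff_deriv.mp hu').2
  have hu1cont : Continuous (deriv u) := hu1.continuous
  have hu1diff : Differentiable ℝ (deriv u) := hu1.differentiable (by simp)
  have hu2cont : Continuous (deriv (deriv u)) := (contDiff_infty_iff_deriv.mp hu1).2.continuous
  have hsupp1 : HasCompactSupport (deriv u) := hsupp.deriv
  have hsupp2 : HasCompactSupport (deriv (deriv u)) := hsupp1.deriv
  have hder : ∀ x, HasDerivAt u (deriv u x) x := fun x => (hudiff x).hasDerivAt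
  have hder1 : ∀ x, HasDerivAt (deriv u) (deriv (deriv u) x) x := fun x => (hu1diff x).hasDerivAt
  have hsuppc : HasCompactSupport (fun x => (starRingEnd ℂ) (u x)) :=
    hsupp.comp_left (map_zero _)
  have hsuppc1 : HasCompactSupport (fun x => (starRingEnd ℂ) (deriv u x)) :=
    hsupp1.comp_left (map_zero _)
  have hconjcont : Continuous (fun x => (starRingEnd ℂ) (u x)) := continuous_star.comp hucont
  have hconjcont1 : Continuous (fun x => (starRingEnd ℂ) (deriv u x)) :=
    continuous_star.comp hu1cont
  have mkint : ∀ f : ℝ → ℂ, Continuous f → HasCompactSupport f → Integrable f :=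
    fun f hf hsf => hf.integrable_of_hasCompactSupport hsf
  have mkintR : ∀ f : ℝ → ℝ, Continuous f → HasCompactSupport f → Integrable f :=
    fun f hf hsf => hf.integrable_of_hasCompactSupport hsf
  -- constants
  set E : ℂ := Complex.exp (-(Complex.I * α)) with hE
  have hEre : E.re = Real.cos α := by
    have h : -(Complex.I * α) = ((-α : ℝ):ℂ) * Complex.I := by push_cast; ring
    rw [hE, h, Complex.exp_ofReal_mul_I_re]; simp
  have hEim : E.im = -Real.sin α := by
    have h : -(Complex.I * α) = ((-α : ℝ):ℂ) * Complex.I := by push_cast; ring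
    rw [hE, h, Complex.exp_ofReal_mul_I_im]; simp
  have hσ0 : σ ≠ 0 := fun h => by simp [h] at hσ
  set s : ℝ := ‖σ‖ with hs
  have hspos : 0 < s := norm_pos_iff.mpr hσ0
  -- named integrals
  set IA : ℝ := ∫ x : ℝ, ‖E * (-(deriv (deriv u) x))
      + (ρ : ℂ) * (x : ℂ) ^ (2 * k + 1) * u x‖ ^ 2 with hIA
  set IB : ℝ := ∫ x : ℝ, ‖(x : ℂ) ^ 2 * u x‖ ^ 2 with hIB
  set Id' : ℝ := ∫ x : ℝ, ‖deriv u x‖ ^ 2 with hId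
  set Ix : ℝ := ∫ x : ℝ, ‖(x : ℂ) * u x‖ ^ 2 with hIx
  set Iu : ℝ := ∫ x : ℝ, ‖u x‖ ^ 2 with hIu
  set IR : ℝ := ∫ x : ℝ, ‖E * (-(deriv (deriv u) x))
      + σ * (x : ℂ) ^ 2 * u x + (ρ : ℂ) * (x : ℂ) ^ (2 * k + 1) * u x‖ ^ 2 with hIR
  show (1 - |σ.re| / s) * (IA + s ^ 2 * IB) + 2 * σ.im * |Real.cos α| * (Id' + Ix)
      + 2 * σ.im * Real.sin α * Iu ≤ IR
  -- the two main functions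
  set A : ℝ → ℂ := fun x => E * (-(deriv (deriv u) x))
      + (ρ : ℂ) * (x : ℂ) ^ (2 * k + 1) * u x with hA
  set B : ℝ → ℂ := fun x => (x : ℂ) ^ 2 * u x with hB
  have hIA' : IA = ∫ x : ℝ, ‖A x‖ ^ 2 := rfl
  have hIB' : IB = ∫ x : ℝ, ‖B x‖ ^ 2 := rfl
  have hAcont : Continuous A := by
    rw [hA]; fun_prop
  have hBcont : Continuous B := by
    rw [hB]; fun_prop
  have hAsupp : HasCompactSupport A := by
    rw [hA]; exact ((hsupp2.comp_left (g := Neg.neg) neg_zero).mul_left).add hsupp.mul_left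
  have hBsupp : HasCompactSupport B := by
    rw [hB]; exact hsupp.mul_left
  -- integrability facts
  have intA2 : Integrable (fun x : ℝ => ‖A x‖ ^ 2) :=
    mkintR _ (by fun_prop) (hAsupp.comp_left (g := fun z : ℂ => ‖z‖ ^ 2) (by simp))
  have intB2 : Integrable (fun x : ℝ => ‖B x‖ ^ 2) :=
    mkintR _ (by fun_prop) (hBsupp.comp_left (g := fun z : ℂ => ‖z‖ ^ 2) (by simp))
  have intAB : Integrable (fun x : ℝ => ‖A x‖ * ‖B x‖) :=
    mkintR _ (by fun_prop) ((hBsupp.comp_left (g := fun z : ℂ => ‖z‖) (by simp)).mul_left)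
  have intcross : Integrable (fun x : ℝ => A x * (starRingEnd ℂ) (B x)) :=
    mkint _ (hAcont.mul (continuous_star.comp hBcont))
      ((hBsupp.comp_left (g := starRingEnd ℂ) (by simp)).mul_left)
  have intu2 : Integrable (fun x : ℝ => ‖u x‖ ^ 2) :=
    mkintR _ (by fun_prop) (hsupp.comp_left (g := fun z : ℂ => ‖z‖ ^ 2) (by simp))
  have intd2 : Integrable (fun x : ℝ => ‖deriv u x‖ ^ 2) :=
    mkintR _ (by fun_prop) (hsupp1.comp_left (g := fun z : ℂ => ‖z‖ ^ 2) (by simp))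
  have intx2 : Integrable (fun x : ℝ => ‖(x : ℂ) * u x‖ ^ 2) :=
    mkintR _ (by fun_prop) ((hsupp.mul_left).comp_left (g := fun z : ℂ => ‖z‖ ^ 2) (by simp))
  -- more integrands
  have hcumul : ∀ (c : ℝ → ℂ), Continuous c →
      Integrable (fun x : ℝ => c x * u x) := fun c hc =>
    mkint _ (hc.mul hucont) hsupp.mul_left
  have hc1mul : ∀ (c : ℝ → ℂ), Continuous c →
      Integrable (fun x : ℝ => c x * deriv u x) := fun c hc =>
    mkint _ (hc.mul hu1cont) hsupp1.mul_left
  have hc2mul : ∀ (c : ℝ → ℂ), Continuous c →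
      Integrable (fun x : ℝ => c x * deriv (deriv u) x) := fun c hc =>
    mkint _ (hc.mul hu2cont) hsupp2.mul_left
  -- key derivative computations
  have hD1 : ∀ x : ℝ, HasDerivAt (fun y : ℝ => (y:ℂ) ^ 2 * (starRingEnd ℂ) (u y))
      (2 * (x:ℂ) * (starRingEnd ℂ) (u x) + (x:ℂ) ^ 2 * (starRingEnd ℂ) (deriv u x)) x := by
    intro x
    have h1 : HasDerivAt (fun y : ℝ => (y:ℂ) ^ 2) (2 * (x:ℂ)) x := by
      have h := (hasDerivAt_coeC x).mul (hasDerivAt_coeC x)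
      simp only [one_mul, mul_one] at h
      simpa using (hasDerivAt_pow 2 (x:ℂ)).comp_ofReal
    have h2 : HasDerivAt (fun y : ℝ => (starRingEnd ℂ) (u y))
        ((starRingEnd ℂ) (deriv u x)) x := (hder x).star
    exact h1.mul h2
  have hD2 : ∀ x : ℝ, HasDerivAt (fun y : ℝ => u y * (starRingEnd ℂ) (u y))
      (deriv u x * (starRingEnd ℂ) (u x) + u x * (starRingEnd ℂ) (deriv u x)) x := by
    intro x
    have h2 : HasDerivAt (fun y : ℝ => (starRingEnd ℂ) (u y))
        ((starRingEnd ℂ) (deriv u x)) x := (hder x).star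
    exact (hder x).mul h2
  -- first integration by parts
  have parts1 : (∫ x : ℝ, ((x:ℂ) ^ 2 * (starRingEnd ℂ) (u x)) * deriv (deriv u) x)
      = - ∫ x : ℝ, (2 * (x:ℂ) * (starRingEnd ℂ) (u x)
          + (x:ℂ) ^ 2 * (starRingEnd ℂ) (deriv u x)) * deriv u x := by
    apply MeasureTheory.integral_mul_deriv_eq_deriv_mul_of_integrable (fun x _ => hD1 x) (fun x _ => hder1 x)
    · exact hc2mul _ ((Complex.continuous_ofReal.pow 2).mul hconjcont)
    · exact hc1mul _ (((continuous_const.mul Complex.continuous_ofReal).mul hconjcont).add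
        ((Complex.continuous_ofReal.pow 2).mul hconjcont1))
    · exact hc1mul _ ((Complex.continuous_ofReal.pow 2).mul hconjcont)
  -- second integration by parts
  have parts2 : (∫ x : ℝ, (x:ℂ) * (deriv u x * (starRingEnd ℂ) (u x)
        + u x * (starRingEnd ℂ) (deriv u x)))
      = - ∫ x : ℝ, (1:ℂ) * (u x * (starRingEnd ℂ) (u x)) := by
    apply MeasureTheory.integral_mul_deriv_eq_deriv_mul_of_integrable
      (u' := fun _ => (1:ℂ)) (fun x _ => hasDerivAt_coeC x) (fun x _ => hD2 x)
    · apply mkint _ (Complex.continuous_ofReal.mul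
        ((hu1cont.mul hconjcont).add (hucont.mul hconjcont1)))
      exact ((hsupp1.mul_right).add hsupp.mul_right).mul_left
    · apply mkint _ (continuous_const.mul (hucont.mul hconjcont))
      exact (hsupp.mul_right).mul_left
    · apply mkint _ (Complex.continuous_ofReal.mul (hucont.mul hconjcont))
      exact (hsupp.mul_right).mul_left
  -- named complex integrals
  set Qc : ℂ := ∫ x : ℝ, ((x:ℂ) * (starRingEnd ℂ) (u x)) * deriv u x with hQc
  set Pc : ℂ := ∫ x : ℝ, ((x:ℂ) ^ 2 * (starRingEnd ℂ) (deriv u x)) * deriv u x with hPc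
  set Rc : ℂ := ∫ x : ℝ, ((x:ℂ) ^ (2*k+1) * (x:ℂ) ^ 2) * (u x * (starRingEnd ℂ) (u x)) with hRc
  set T : ℂ := ∫ x : ℝ, A x * (starRingEnd ℂ) (B x) with hT
  have intQ : Integrable (fun x : ℝ => ((x:ℂ) * (starRingEnd ℂ) (u x)) * deriv u x) :=
    hc1mul _ (Complex.continuous_ofReal.mul hconjcont)
  have intP : Integrable (fun x : ℝ => ((x:ℂ) ^ 2 * (starRingEnd ℂ) (deriv u x)) * deriv u x) :=
    hc1mul _ ((Complex.continuous_ofReal.pow 2).mul hconjcont1)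
  have intQ2 : Integrable (fun x : ℝ => (x:ℂ) * (u x * (starRingEnd ℂ) (deriv u x))) :=
    mkint _ (Complex.continuous_ofReal.mul (hucont.mul hconjcont1)) (hsupp.mul_right).mul_left
  -- Pc is real and nonnegative
  set p : ℝ := ∫ x : ℝ, x ^ 2 * Complex.normSq (deriv u x) with hp
  have hPeq : Pc = ((p : ℝ) : ℂ) := by
    rw [hPc, hp]
    have hptP : ∀ x : ℝ, ((x:ℂ) ^ 2 * (starRingEnd ℂ) (deriv u x)) * deriv u x
        = (((x ^ 2 * Complex.normSq (deriv u x) : ℝ)) : ℂ) := by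
      intro x
      rw [show ((x:ℂ) ^ 2 * (starRingEnd ℂ) (deriv u x)) * deriv u x
          = (x:ℂ) ^ 2 * (deriv u x * (starRingEnd ℂ) (deriv u x)) from by ring,
        Complex.mul_conj]
      push_cast
      ring
    simp_rw [hptP]
    exact integral_ofReal
  have hp0 : 0 ≤ p := by
    rw [hp]
    exact integral_nonneg fun x => mul_nonneg (sq_nonneg _) (Complex.normSq_nonneg _)
  -- Rc is real
  have hRcim : Rc.im = 0 := by
    rw [hRc]
    have hptR : ∀ x : ℝ, ((x:ℂ) ^ (2*k+1) * (x:ℂ) ^ 2) * (u x * (starRingEnd ℂ) (u x))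
        = (((x ^ (2*k+1) * x ^ 2 * Complex.normSq (u x) : ℝ)) : ℂ) := by
      intro x
      rw [Complex.mul_conj]
      push_cast
      ring
    simp_rw [hptR]
    rw [show (∫ x : ℝ, ((x ^ (2*k+1) * x ^ 2 * Complex.normSq (u x) : ℝ) : ℂ))
        = ((∫ x : ℝ, x ^ (2*k+1) * x ^ 2 * Complex.normSq (u x) : ℝ) : ℂ) from integral_ofReal]
    exact Complex.ofReal_im _
  -- the real part of Qc
  have hQstar : (∫ x : ℝ, (x:ℂ) * (u x * (starRingEnd ℂ) (deriv u x)))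
      = (starRingEnd ℂ) Qc := by
    rw [hQc, ← integral_conj]
    congr 1; funext x
    simp only [map_mul, Complex.conj_conj, Complex.conj_ofReal]
    ring
  have hIunormSq : Iu = ∫ x : ℝ, Complex.normSq (u x) := by
    rw [hIu]; congr 1; funext x; rw [Complex.sq_norm]
  have hsum : Qc + (starRingEnd ℂ) Qc = -((Iu : ℝ) : ℂ) := by
    have e1 : (∫ x : ℝ, (x:ℂ) * (deriv u x * (starRingEnd ℂ) (u x)
          + u x * (starRingEnd ℂ) (deriv u x))) = Qc + (starRingEnd ℂ) Qc := by
      have hsplit : (fun x : ℝ => (x:ℂ) * (deriv u x * (starRingEnd ℂ) (u x)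
            + u x * (starRingEnd ℂ) (deriv u x)))
          = fun x : ℝ => ((x:ℂ) * (starRingEnd ℂ) (u x)) * deriv u x
            + (x:ℂ) * (u x * (starRingEnd ℂ) (deriv u x)) := by
        funext x; ring
      rw [hsplit, integral_add intQ intQ2, hQc, hQstar]
    have e2 : (∫ x : ℝ, (1:ℂ) * (u x * (starRingEnd ℂ) (u x))) = ((Iu : ℝ) : ℂ) := by
      have hptU : ∀ x : ℝ, (1:ℂ) * (u x * (starRingEnd ℂ) (u x))
          = ((Complex.normSq (u x) : ℝ) : ℂ) := by
        intro x; rw [one_mul, Complex.mul_conj]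
      simp_rw [hptU]
      rw [hIunormSq]
      exact integral_ofReal
    rw [← e1, parts2, e2]
  have hQre : 2 * Qc.re = -Iu := by
    have h := congrArg Complex.re hsum
    simp only [Complex.add_re, Complex.conj_re, Complex.neg_re, Complex.ofReal_re] at h
    linarith
  -- the imaginary part of Qc
  have hQim : |Qc.im| ≤ (Id' + Ix) / 2 := by
    have h1 : |Qc.im| ≤ ‖Qc‖ := by
      exact Complex.abs_im_le_norm Qc
    have h2 : ‖Qc‖ ≤ ∫ x : ℝ, ‖((x:ℂ) * (starRingEnd ℂ) (u x)) * deriv u x‖ := by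
      rw [hQc]; exact norm_integral_le_integral_norm _
    have h3 : (∫ x : ℝ, ‖((x:ℂ) * (starRingEnd ℂ) (u x)) * deriv u x‖)
        ≤ ∫ x : ℝ, (‖deriv u x‖ ^ 2 + ‖(x:ℂ) * u x‖ ^ 2) / 2 := by
      apply integral_mono intQ.norm ((intd2.add intx2).div_const 2)
      intro x
      have he : ‖((x:ℂ) * (starRingEnd ℂ) (u x)) * deriv u x‖
          = ‖deriv u x‖ * ‖(x:ℂ) * u x‖ := by
        simp only [norm_mul, RCLike.norm_conj]
        ring
      show ‖((x:ℂ) * (starRingEnd ℂ) (u x)) * deriv u x‖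
          ≤ (‖deriv u x‖ ^ 2 + ‖(x:ℂ) * u x‖ ^ 2) / 2
      rw [he]
      nlinarith [sq_nonneg (‖deriv u x‖ - ‖(x:ℂ) * u x‖)]
    have h4 : (∫ x : ℝ, (‖deriv u x‖ ^ 2 + ‖(x:ℂ) * u x‖ ^ 2) / 2) = (Id' + Ix) / 2 := by
      rw [integral_div, integral_add intd2 intx2, ← hId, ← hIx]
    linarith
  -- compute T
  have hsupp2n : HasCompactSupport (fun x : ℝ => -(deriv (deriv u) x)) :=
    hsupp2.comp_left (g := Neg.neg) neg_zero
  have intE1 : Integrable (fun x : ℝ =>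
      E * ((-(deriv (deriv u) x)) * ((x:ℂ) ^ 2 * (starRingEnd ℂ) (u x)))) :=
    mkint _ (continuous_const.mul ((hu2cont.neg).mul
      ((Complex.continuous_ofReal.pow 2).mul hconjcont))) ((hsupp2n.mul_right).mul_left)
  have intR2 : Integrable (fun x : ℝ =>
      (ρ:ℂ) * (((x:ℂ) ^ (2*k+1) * (x:ℂ) ^ 2) * (u x * (starRingEnd ℂ) (u x)))) :=
    mkint _ (continuous_const.mul (((Complex.continuous_ofReal.pow _).mul
      (Complex.continuous_ofReal.pow 2)).mul (hucont.mul hconjcont)))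
      (((hsupp.mul_right).mul_left).mul_left)
  have hTsplit : T = E * (2 * Qc + Pc) + (ρ:ℂ) * Rc := by
    have hpt : ∀ x : ℝ, A x * (starRingEnd ℂ) (B x)
        = E * ((-(deriv (deriv u) x)) * ((x:ℂ) ^ 2 * (starRingEnd ℂ) (u x)))
          + (ρ:ℂ) * (((x:ℂ) ^ (2*k+1) * (x:ℂ) ^ 2) * (u x * (starRingEnd ℂ) (u x))) := by
      intro x
      simp only [hA, hB, map_mul, map_pow, Complex.conj_ofReal]
      ring
    rw [hT]
    simp_rw [hpt]
    rw [integral_add intE1 intR2, integral_const_mul, integral_const_mul]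
    have hf1 : (∫ x : ℝ, (-(deriv (deriv u) x)) * ((x:ℂ) ^ 2 * (starRingEnd ℂ) (u x)))
        = 2 * Qc + Pc := by
      have h1 : (fun x : ℝ => (-(deriv (deriv u) x)) * ((x:ℂ) ^ 2 * (starRingEnd ℂ) (u x)))
          = fun x : ℝ => -(((x:ℂ) ^ 2 * (starRingEnd ℂ) (u x)) * deriv (deriv u) x) := by
        funext x; ring
      rw [h1, integral_neg, parts1, neg_neg]
      have h2 : (fun x : ℝ => (2 * (x:ℂ) * (starRingEnd ℂ) (u x)
            + (x:ℂ) ^ 2 * (starRingEnd ℂ) (deriv u x)) * deriv u x)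
          = fun x : ℝ => (2:ℂ) * (((x:ℂ) * (starRingEnd ℂ) (u x)) * deriv u x)
            + ((x:ℂ) ^ 2 * (starRingEnd ℂ) (deriv u x)) * deriv u x := by
        funext x; ring
      rw [h2, integral_add (intQ.const_mul 2) intP, integral_const_mul, ← hQc, ← hPc]
    rw [hf1, ← hRc]
  -- pointwise expansion of the right-hand side
  have hptExp : ∀ x : ℝ, ‖A x + σ * B x‖ ^ 2
      = ‖A x‖ ^ 2 + s ^ 2 * ‖B x‖ ^ 2
        + 2 * ((starRingEnd ℂ) σ * (A x * (starRingEnd ℂ) (B x))).re := by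
    intro x
    have hnA : Complex.normSq (A x) = ‖A x‖ ^ 2 := by
      rw [← Complex.sq_norm]
    have hnB : Complex.normSq (B x) = ‖B x‖ ^ 2 := by
      rw [← Complex.sq_norm]
    have hnσ : Complex.normSq σ = s ^ 2 := by
      rw [hs, Complex.sq_norm]
    rw [show ‖A x + σ * B x‖ ^ 2 = Complex.normSq (A x + σ * B x) from by
        rw [← Complex.sq_norm],
      Complex.normSq_add, Complex.normSq_mul, map_mul (starRingEnd ℂ) σ (B x),
      show A x * ((starRingEnd ℂ) σ * (starRingEnd ℂ) (B x))
        = (starRingEnd ℂ) σ * (A x * (starRingEnd ℂ) (B x)) from by ring,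
      hnA, hnB, hnσ]
  have intcross2 : Integrable (fun x : ℝ =>
      2 * ((starRingEnd ℂ) σ * (A x * (starRingEnd ℂ) (B x))).re) :=
    ((intcross.const_mul ((starRingEnd ℂ) σ)).re).const_mul 2
  have hcrossval : (∫ x : ℝ, ((starRingEnd ℂ) σ * (A x * (starRingEnd ℂ) (B x))).re)
      = ((starRingEnd ℂ) σ * T).re := by
    rw [hT, ← integral_const_mul]
    exact integral_re (intcross.const_mul _)
  have hconjre : ((starRingEnd ℂ) σ * T).re = σ.re * T.re + σ.im * T.im := by
    rw [Complex.mul_re, Complex.conj_re, Complex.conj_im]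
    ring
  have hexp : IR = IA + s ^ 2 * IB + 2 * (σ.re * T.re + σ.im * T.im) := by
    rw [hIR]
    have hcongr : (fun x : ℝ => ‖E * (-(deriv (deriv u) x)) + σ * (x:ℂ) ^ 2 * u x
        + (ρ:ℂ) * (x:ℂ) ^ (2*k+1) * u x‖ ^ 2) = fun x : ℝ => ‖A x + σ * B x‖ ^ 2 := by
      funext x
      rw [show E * (-(deriv (deriv u) x)) + σ * (x:ℂ) ^ 2 * u x
          + (ρ:ℂ) * (x:ℂ) ^ (2*k+1) * u x = A x + σ * B x from by
        simp only [hA, hB]; ring]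
    rw [hcongr]
    simp_rw [hptExp]
    have intI1 : Integrable (fun x : ℝ => ‖A x‖ ^ 2 + s ^ 2 * ‖B x‖ ^ 2) :=
      intA2.add (intB2.const_mul _)
    rw [integral_add intI1 intcross2,
      integral_add intA2 (intB2.const_mul (s ^ 2)), integral_const_mul, integral_const_mul,
      hcrossval, hconjre, ← hIA', ← hIB']
  -- bound on T.im
  have hTim : T.im ≤ |Real.cos α| * (Id' + Ix) + Real.sin α * Iu := by
    have h0 : T.im = Real.cos α * (2 * Qc.im) + (-Real.sin α) * (2 * Qc.re + p) := by
      rw [hTsplit, hPeq]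
      simp only [Complex.add_im, Complex.mul_im, Complex.add_re, Complex.mul_re,
        Complex.ofReal_im, Complex.ofReal_re, hEre, hEim, hRcim,
        Complex.re_ofNat, Complex.im_ofNat]
      ring
    have b1 : Real.cos α * (2 * Qc.im) ≤ |Real.cos α| * (Id' + Ix) := by
      calc Real.cos α * (2 * Qc.im) ≤ |Real.cos α * (2 * Qc.im)| := le_abs_self _
        _ = |Real.cos α| * (2 * |Qc.im|) := by
            rw [abs_mul, abs_mul]; norm_num
        _ ≤ |Real.cos α| * (Id' + Ix) := by
            apply mul_le_mul_of_nonneg_left _ (abs_nonneg _)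
            linarith [hQim]
    have b2 : (-Real.sin α) * (2 * Qc.re + p) ≤ Real.sin α * Iu := by
      rw [hQre]
      nlinarith [mul_nonneg hsin hp0]
    linarith
  -- bound on T.re
  have hTre : |T.re| ≤ (IA / s + s * IB) / 2 := by
    have h1 : |T.re| ≤ ‖T‖ := by
      exact Complex.abs_re_le_norm T
    have h2 : ‖T‖ ≤ ∫ x : ℝ, ‖A x * (starRingEnd ℂ) (B x)‖ := by
      rw [hT]; exact norm_integral_le_integral_norm _
    have h3 : (∫ x : ℝ, ‖A x * (starRingEnd ℂ) (B x)‖)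
        ≤ ∫ x : ℝ, (‖A x‖ ^ 2 / s + s * ‖B x‖ ^ 2) / 2 := by
      apply integral_mono (intcross.norm)
        (((intA2.div_const s).add (intB2.const_mul s)).div_const 2)
      intro x
      show ‖A x * (starRingEnd ℂ) (B x)‖ ≤ (‖A x‖ ^ 2 / s + s * ‖B x‖ ^ 2) / 2
      rw [norm_mul, RCLike.norm_conj, div_add' _ _ _ hspos.ne', div_div,
        le_div_iff₀ (by positivity)]
      nlinarith [sq_nonneg (‖A x‖ - s * ‖B x‖)]
    have h4 : (∫ x : ℝ, (‖A x‖ ^ 2 / s + s * ‖B x‖ ^ 2) / 2) = (IA / s + s * IB) / 2 := by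
      rw [integral_div, integral_add (intA2.div_const s) (intB2.const_mul s),
        integral_div, integral_const_mul, ← hIA', ← hIB']
    linarith
  -- final assembly
  have hfrac : |σ.re| * (IA / s + s * IB) = |σ.re| / s * (IA + s ^ 2 * IB) := by
    have hsne : s ≠ 0 := ne_of_gt hspos
    field_simp
  have f1 : -(|σ.re| / s * (IA + s ^ 2 * IB)) ≤ 2 * (σ.re * T.re) := by
    have habs : |2 * (σ.re * T.re)| = 2 * (|σ.re| * |T.re|) := by
      rw [abs_mul, abs_mul]; norm_num
    have h5 := neg_abs_le (2 * (σ.re * T.re))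
    have h6 : 2 * (|σ.re| * |T.re|) ≤ |σ.re| / s * (IA + s ^ 2 * IB) := by
      rw [← hfrac]
      have h7 := mul_le_mul_of_nonneg_left hTre (abs_nonneg σ.re)
      linarith
    linarith
  have hbnd2 : 2 * σ.im * (|Real.cos α| * (Id' + Ix) + Real.sin α * Iu)
      ≤ 2 * (σ.im * T.im) := by
    have h8 := mul_le_mul_of_nonpos_left hTim (le_of_lt hσ)
    linarith
  have hexpand : (1 - |σ.re| / s) * (IA + s ^ 2 * IB)
      = (IA + s ^ 2 * IB) - |σ.re| / s * (IA + s ^ 2 * IB) := by ring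
  have hsplit2 : 2 * σ.im * |Real.cos α| * (Id' + Ix) + 2 * σ.im * Real.sin α * Iu
      = 2 * σ.im * (|Real.cos α| * (Id' + Ix) + Real.sin α * Iu) := by ring
  linarith [f1, hbnd2, hexp, hexpand, hsplit2]
end

section
/- Let k ≥ 1 be an integer, β ∈ ℂ \ {0} and θ ∈ ℂ satisfy conditions (2.6): 0 < arg β + (2k+3)·Im θ < π and 0 < arg β + (2k−1)·Im θ < π, and set α = arg β + (2k+3)·Im θ ∈ (0, π). Define (K(β,θ)u)(x) = −u''(x) + e^{4θ} x² u(x) + |β| e^{(2k+3)Re θ} e^{iα} x^{2k+1} u(x). Then for every smooth compactly supported u : ℝ → ℂ: Re[ e^{−i(α−π/2)} ⟨u, K(β,θ)u⟩ ] ≥ (sin α)·∫_ℝ |u'(x)|² dx; equivalently, with ξ = (sin α)^{−1} > 0, ξ·Re[ e^{−i(α−π/2)} ⟨u, K(β,θ)u⟩ ] ≥ ⟨u, p²u⟩ = ∫_ℝ |u'(x)|² dx. -/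
open MeasureTheory
open scoped Real ContDiff

/-- **Lemma 2.4**: under conditions (2.6), the quadratic form of the scaled dilated odd
anharmonic oscillator `K(β,θ)`, rotated by `e^{−i(α−π/2)}`, dominates the kinetic term. -/
theorem lemma_2_4_kinetic_lower_bound
    (k : ℕ) (hk : 1 ≤ k) (β : ℂ) (hβ : β ≠ 0) (θ : ℂ)
    (h1 : 0 < β.arg + (2 * (k : ℝ) + 3) * θ.im)
    (h2 : β.arg + (2 * (k : ℝ) + 3) * θ.im < π)
    (h3 : 0 < β.arg + (2 * (k : ℝ) - 1) * θ.im)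
    (h4 : β.arg + (2 * (k : ℝ) - 1) * θ.im < π)
    (α : ℝ) (hα : α = β.arg + (2 * (k : ℝ) + 3) * θ.im)
    (u : ℝ → ℂ) (hu : ContDiff ℝ (⊤ : ℕ∞) u) (hsupp : HasCompactSupport u) :
    Real.sin α * (∫ x : ℝ, ‖deriv u x‖ ^ 2)
      ≤ (Complex.exp (-(Complex.I * ((α : ℂ) - π / 2))) *
          ∫ x : ℝ, (starRingEnd ℂ) (u x) *
            (-(deriv (deriv u) x) + Complex.exp (4 * θ) * (x : ℂ) ^ 2 * u x
              + (‖β‖ : ℂ) * (Real.exp ((2 * (k : ℝ) + 3) * θ.re) : ℂ)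
                * Complex.exp (Complex.I * α) * (x : ℂ) ^ (2 * k + 1) * u x)).re
    ∧ (∫ x : ℝ, ‖deriv u x‖ ^ 2)
      ≤ (Real.sin α)⁻¹ *
        (Complex.exp (-(Complex.I * ((α : ℂ) - π / 2))) *
          ∫ x : ℝ, (starRingEnd ℂ) (u x) *
            (-(deriv (deriv u) x) + Complex.exp (4 * θ) * (x : ℂ) ^ 2 * u x
              + (‖β‖ : ℂ) * (Real.exp ((2 * (k : ℝ) + 3) * θ.re) : ℂ)
                * Complex.exp (Complex.I * α) * (x : ℂ) ^ (2 * k + 1) * u x)).re := by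
  -- regularity facts
  have hu0 : ContDiff ℝ ∞ u := hu.of_le (by simp)
  have hu1 : ContDiff ℝ ∞ (deriv u) := (contDiff_infty_iff_deriv.mp hu0).2
  have hu2 : ContDiff ℝ ∞ (deriv (deriv u)) := (contDiff_infty_iff_deriv.mp hu1).2
  have hcu : Continuous u := hu.continuous
  have hcu1 : Continuous (deriv u) := hu1.continuous
  have hcu2 : Continuous (deriv (deriv u)) := hu2.continuous
  have hs1 : HasCompactSupport (deriv u) := hsupp.deriv
  have hs2 : HasCompactSupport (deriv (deriv u)) := hs1.deriv
  have hscu : HasCompactSupport (fun x => (starRingEnd ℂ) (u x)) :=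
    hsupp.comp_left (g := (starRingEnd ℂ)) (by simp)
  have hscu1 : HasCompactSupport (fun x => (starRingEnd ℂ) (deriv u x)) :=
    hs1.comp_left (g := (starRingEnd ℂ)) (by simp)
  have hccu : Continuous (fun x => (starRingEnd ℂ) (u x)) := Complex.continuous_conj.comp hcu
  have hccu1 : Continuous (fun x => (starRingEnd ℂ) (deriv u x)) :=
    Complex.continuous_conj.comp hcu1
  have hd : ∀ x, HasDerivAt u (deriv u x) x := fun x =>
    ((hu0.differentiable (by simp)) x).hasDerivAt
  have hd1 : ∀ x, HasDerivAt (deriv u) (deriv (deriv u) x) x := fun x =>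
    ((hu1.differentiable (by simp)) x).hasDerivAt
  -- integration by parts :  ∫ conj u * u'' = - ∫ conj u' * u'
  have hibp : (∫ x : ℝ, (starRingEnd ℂ) (u x) * deriv (deriv u) x)
      = - ∫ x : ℝ, (starRingEnd ℂ) (deriv u x) * deriv u x := by
    apply integral_mul_deriv_eq_deriv_mul_of_integrable
      (u := fun x => (starRingEnd ℂ) (u x)) (v := deriv u)
      (u' := fun x => (starRingEnd ℂ) (deriv u x)) (v' := deriv (deriv u))
    · exact fun x _ => (hd x).star
    · exact fun x _ => hd1 x
    · exact (hccu.mul hcu2).integrable_of_hasCompactSupport (hscu.mul_right)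
    · exact (hccu1.mul hcu1).integrable_of_hasCompactSupport (hscu1.mul_right)
    · exact (hccu.mul hcu1).integrable_of_hasCompactSupport (hscu.mul_right)
  have hnorm : (∫ x : ℝ, (starRingEnd ℂ) (deriv u x) * deriv u x)
      = ((∫ x : ℝ, ‖deriv u x‖ ^ 2 : ℝ) : ℂ) := by
    have : (fun x : ℝ => (starRingEnd ℂ) (deriv u x) * deriv u x)
        = fun x : ℝ => ((‖deriv u x‖ ^ 2 : ℝ) : ℂ) := by
      funext x; rw [Complex.conj_mul']; push_cast; ring
    rw [this]; exact integral_ofReal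
  -- the three real integrals
  set P : ℝ := ∫ x : ℝ, ‖deriv u x‖ ^ 2 with hP
  set A : ℝ := ∫ x : ℝ, x ^ 2 * ‖u x‖ ^ 2 with hA
  set B : ℝ := ∫ x : ℝ, x ^ (2 * k + 1) * ‖u x‖ ^ 2 with hB
  set c : ℝ := ‖β‖ * Real.exp ((2 * (k : ℝ) + 3) * θ.re) with hc
  have hA0 : 0 ≤ A := integral_nonneg fun x => by positivity
  -- splitting the big integral
  have hsplit : (∫ x : ℝ, (starRingEnd ℂ) (u x) *
            (-(deriv (deriv u) x) + Complex.exp (4 * θ) * (x : ℂ) ^ 2 * u x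
              + (‖β‖ : ℂ) * (Real.exp ((2 * (k : ℝ) + 3) * θ.re) : ℂ)
                * Complex.exp (Complex.I * α) * (x : ℂ) ^ (2 * k + 1) * u x))
      = (P : ℂ) + Complex.exp (4 * θ) * (A : ℂ)
          + (c : ℂ) * Complex.exp (Complex.I * α) * (B : ℂ) := by
    have e1 : Integrable (fun x : ℝ => (starRingEnd ℂ) (u x) * (-(deriv (deriv u) x))) :=
      (hccu.mul hcu2.neg).integrable_of_hasCompactSupport (hscu.mul_right)
    have e2 : Integrable (fun x : ℝ =>
        (starRingEnd ℂ) (u x) * (Complex.exp (4 * θ) * (x : ℂ) ^ 2 * u x)) := by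
      apply Continuous.integrable_of_hasCompactSupport
      · exact hccu.mul ((continuous_const.mul ((Complex.continuous_ofReal.pow 2))).mul hcu)
      · exact hscu.mul_right
    have e3 : Integrable (fun x : ℝ => (starRingEnd ℂ) (u x) *
        ((‖β‖ : ℂ) * (Real.exp ((2 * (k : ℝ) + 3) * θ.re) : ℂ)
                * Complex.exp (Complex.I * α) * (x : ℂ) ^ (2 * k + 1) * u x)) := by
      apply Continuous.integrable_of_hasCompactSupport
      · exact hccu.mul ((continuous_const.mul (Complex.continuous_ofReal.pow _)).mul hcu)
      · exact hscu.mul_right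
    have : (∫ x : ℝ, (starRingEnd ℂ) (u x) *
            (-(deriv (deriv u) x) + Complex.exp (4 * θ) * (x : ℂ) ^ 2 * u x
              + (‖β‖ : ℂ) * (Real.exp ((2 * (k : ℝ) + 3) * θ.re) : ℂ)
                * Complex.exp (Complex.I * α) * (x : ℂ) ^ (2 * k + 1) * u x))
        = (∫ x : ℝ, (starRingEnd ℂ) (u x) * (-(deriv (deriv u) x)))
          + (∫ x : ℝ, (starRingEnd ℂ) (u x) * (Complex.exp (4 * θ) * (x : ℂ) ^ 2 * u x))
          + (∫ x : ℝ, (starRingEnd ℂ) (u x) *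
              ((‖β‖ : ℂ) * (Real.exp ((2 * (k : ℝ) + 3) * θ.re) : ℂ)
                * Complex.exp (Complex.I * α) * (x : ℂ) ^ (2 * k + 1) * u x)) := by
      have hfun : (fun x : ℝ => (starRingEnd ℂ) (u x) *
            (-(deriv (deriv u) x) + Complex.exp (4 * θ) * (x : ℂ) ^ 2 * u x
              + (‖β‖ : ℂ) * (Real.exp ((2 * (k : ℝ) + 3) * θ.re) : ℂ)
                * Complex.exp (Complex.I * α) * (x : ℂ) ^ (2 * k + 1) * u x))
          = fun x : ℝ => ((starRingEnd ℂ) (u x) * (-(deriv (deriv u) x))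
              + (starRingEnd ℂ) (u x) * (Complex.exp (4 * θ) * (x : ℂ) ^ 2 * u x))
              + (starRingEnd ℂ) (u x) *
              ((‖β‖ : ℂ) * (Real.exp ((2 * (k : ℝ) + 3) * θ.re) : ℂ)
                * Complex.exp (Complex.I * α) * (x : ℂ) ^ (2 * k + 1) * u x) := by
        funext x; ring
      have e12 : Integrable (fun x : ℝ => (starRingEnd ℂ) (u x) * (-(deriv (deriv u) x))
              + (starRingEnd ℂ) (u x) * (Complex.exp (4 * θ) * (x : ℂ) ^ 2 * u x)) :=
        e1.add e2
      rw [hfun, integral_add e12 e3, integral_add e1 e2]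
    rw [this]
    have t1 : (∫ x : ℝ, (starRingEnd ℂ) (u x) * (-(deriv (deriv u) x))) = (P : ℂ) := by
      rw [show (fun x : ℝ => (starRingEnd ℂ) (u x) * (-(deriv (deriv u) x)))
          = (fun x : ℝ => -((starRingEnd ℂ) (u x) * deriv (deriv u) x)) by funext x; ring,
        integral_neg, hibp, neg_neg, hnorm]
    have t2 : (∫ x : ℝ, (starRingEnd ℂ) (u x) * (Complex.exp (4 * θ) * (x : ℂ) ^ 2 * u x))
        = Complex.exp (4 * θ) * (A : ℂ) := by
      rw [show (fun x : ℝ => (starRingEnd ℂ) (u x) * (Complex.exp (4 * θ) * (x : ℂ) ^ 2 * u x))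
          = (fun x : ℝ => Complex.exp (4 * θ) * ((x ^ 2 * ‖u x‖ ^ 2 : ℝ) : ℂ)) by
            funext x
            rw [show (starRingEnd ℂ) (u x) * (Complex.exp (4 * θ) * (x : ℂ) ^ 2 * u x)
              = Complex.exp (4 * θ) * ((x:ℂ) ^ 2 * ((starRingEnd ℂ) (u x) * u x)) by ring,
              Complex.conj_mul']
            push_cast; ring,
        integral_const_mul]
      congr 1
      exact integral_ofReal
    have t3 : (∫ x : ℝ, (starRingEnd ℂ) (u x) *
              ((‖β‖ : ℂ) * (Real.exp ((2 * (k : ℝ) + 3) * θ.re) : ℂ)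
                * Complex.exp (Complex.I * α) * (x : ℂ) ^ (2 * k + 1) * u x))
        = (c : ℂ) * Complex.exp (Complex.I * α) * (B : ℂ) := by
      rw [show (fun x : ℝ => (starRingEnd ℂ) (u x) *
              ((‖β‖ : ℂ) * (Real.exp ((2 * (k : ℝ) + 3) * θ.re) : ℂ)
                * Complex.exp (Complex.I * α) * (x : ℂ) ^ (2 * k + 1) * u x))
          = (fun x : ℝ => (c : ℂ) * Complex.exp (Complex.I * α)
              * ((x ^ (2 * k + 1) * ‖u x‖ ^ 2 : ℝ) : ℂ)) by
            funext x
            rw [show (starRingEnd ℂ) (u x) *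
              ((‖β‖ : ℂ) * (Real.exp ((2 * (k : ℝ) + 3) * θ.re) : ℂ)
                * Complex.exp (Complex.I * α) * (x : ℂ) ^ (2 * k + 1) * u x)
              = ((‖β‖ : ℂ) * (Real.exp ((2 * (k : ℝ) + 3) * θ.re) : ℂ))
                * Complex.exp (Complex.I * α)
                * ((x:ℂ) ^ (2 * k + 1) * ((starRingEnd ℂ) (u x) * u x)) by ring,
              Complex.conj_mul', hc]
            push_cast; ring,
        integral_const_mul]
      congr 1
      exact integral_ofReal
    rw [t1, t2, t3]
  rw [hsplit]
  -- compute the real part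
  have hre : (Complex.exp (-(Complex.I * ((α : ℂ) - π / 2))) *
      ((P : ℂ) + Complex.exp (4 * θ) * (A : ℂ)
          + (c : ℂ) * Complex.exp (Complex.I * α) * (B : ℂ))).re
      = Real.sin α * P + Real.exp (4 * θ.re) * Real.sin (α - 4 * θ.im) * A := by
    have hw : -(Complex.I * ((α : ℂ) - π / 2)) = ((π / 2 - α : ℝ) : ℂ) * Complex.I := by
      push_cast; ring
    rw [hw, mul_add, mul_add, Complex.add_re, Complex.add_re]
    have r1 : (Complex.exp (((π / 2 - α : ℝ) : ℂ) * Complex.I) * (P : ℂ)).re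
        = Real.sin α * P := by
      rw [show Complex.exp (((π / 2 - α : ℝ) : ℂ) * Complex.I) * (P : ℂ)
          = ((P : ℝ) : ℂ) * Complex.exp (((π / 2 - α : ℝ) : ℂ) * Complex.I) by ring,
        Complex.re_ofReal_mul, Complex.exp_ofReal_mul_I_re, Real.cos_pi_div_two_sub]
      ring
    have r2 : (Complex.exp (((π / 2 - α : ℝ) : ℂ) * Complex.I) *
        (Complex.exp (4 * θ) * (A : ℂ))).re
        = Real.exp (4 * θ.re) * Real.sin (α - 4 * θ.im) * A := by
      rw [show Complex.exp (((π / 2 - α : ℝ) : ℂ) * Complex.I) *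
          (Complex.exp (4 * θ) * (A : ℂ))
          = ((A : ℝ) : ℂ) * (Complex.exp (((π / 2 - α : ℝ) : ℂ) * Complex.I + 4 * θ)) by
            rw [Complex.exp_add]; ring,
        Complex.re_ofReal_mul, Complex.exp_re]
      have him : (((π / 2 - α : ℝ) : ℂ) * Complex.I + 4 * θ).im = π / 2 - (α - 4 * θ.im) := by
        simp; ring
      have hre' : (((π / 2 - α : ℝ) : ℂ) * Complex.I + 4 * θ).re = 4 * θ.re := by simp
      rw [him, hre', Real.cos_pi_div_two_sub]; ring
    have r3 : (Complex.exp (((π / 2 - α : ℝ) : ℂ) * Complex.I) *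
        ((c : ℂ) * Complex.exp (Complex.I * α) * (B : ℂ))).re = 0 := by
      have : Complex.exp (((π / 2 - α : ℝ) : ℂ) * Complex.I) * Complex.exp (Complex.I * α)
          = Complex.I := by
        rw [← Complex.exp_add]
        rw [show ((π / 2 - α : ℝ) : ℂ) * Complex.I + Complex.I * α
            = ((π / 2 : ℝ) : ℂ) * Complex.I by push_cast; ring,
          Complex.exp_mul_I]
        simp
      rw [show Complex.exp (((π / 2 - α : ℝ) : ℂ) * Complex.I) *
          ((c : ℂ) * Complex.exp (Complex.I * α) * (B : ℂ))
          = ((c * B : ℝ) : ℂ) * (Complex.exp (((π / 2 - α : ℝ) : ℂ) * Complex.I)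
              * Complex.exp (Complex.I * α)) by push_cast; ring, this]
      simp
    rw [r1, r2, r3]; ring
  rw [hre]
  -- positivity of the extra term and conclusion
  have hsinα : 0 < Real.sin α := Real.sin_pos_of_pos_of_lt_pi (hα ▸ h1) (hα ▸ h2)
  have hsin2 : 0 < Real.sin (α - 4 * θ.im) := by
    have : α - 4 * θ.im = β.arg + (2 * (k : ℝ) - 1) * θ.im := by rw [hα]; ring
    rw [this]; exact Real.sin_pos_of_pos_of_lt_pi h3 h4
  have hextra : 0 ≤ Real.exp (4 * θ.re) * Real.sin (α - 4 * θ.im) * A := by positivity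
  constructor
  · linarith
  · have h5 : Real.sin α * P ≤ Real.sin α * P
        + Real.exp (4 * θ.re) * Real.sin (α - 4 * θ.im) * A := by linarith
    calc P = (Real.sin α)⁻¹ * (Real.sin α * P) := by field_simp
      _ ≤ (Real.sin α)⁻¹ * (Real.sin α * P
          + Real.exp (4 * θ.re) * Real.sin (α - 4 * θ.im) * A) := by
        apply mul_le_mul_of_nonneg_left h5 (by positivity)
end

section
/- Let k ≥ 1 be an integer and let β ∈ ℂ \ {0}, θ ∈ ℂ satisfy conditions (2.6): 0 < arg β + (2k+3)·Im θ < π and 0 < arg β + (2k−1)·Im θ < π. Define the dilated odd anharmonic oscillator by (H(β,θ)u)(x) = e^{−2θ}(−u''(x)) + e^{2θ} x² u(x) + β e^{(2k+1)θ} x^{2k+1} u(x). Then the numerical range of H(β,θ) lies in the half-plane Π = {z ∈ ℂ : −π + arg β + (2k+1)Im θ ≤ arg z ≤ arg β + (2k+1)Im θ}; concretely, for every smooth compactly supported u : ℝ → ℂ: Re[ e^{−i(arg β + (2k+1)Im θ − π/2)} ⟨u, H(β,θ)u⟩ ] ≥ 0, where ⟨u,v⟩ = ∫_ℝ conj(u(x))v(x)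 dx. -/
open MeasureTheory
open scoped Real

/-- Numerical range containment for the dilated odd anharmonic oscillator
`H(β,θ) = e^{−2θ}p² + e^{2θ}x² + βe^{(2k+1)θ}x^{2k+1}` under conditions (2.6):
key step in the proof of Theorem 2.5. -/
theorem numerical_range_H_beta_theta
    (k : ℕ) (hk : 1 ≤ k) (β : ℂ) (hβ : β ≠ 0) (θ : ℂ)
    (h1 : 0 < β.arg + (2 * (k : ℝ) + 3) * θ.im)
    (h2 : β.arg + (2 * (k : ℝ) + 3) * θ.im < π)
    (h3 : 0 < β.arg + (2 * (k : ℝ) - 1) * θ.im)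
    (h4 : β.arg + (2 * (k : ℝ) - 1) * θ.im < π)
    (u : ℝ → ℂ) (hu : ContDiff ℝ (⊤ : ℕ∞) u) (hsupp : HasCompactSupport u) :
    0 ≤ (Complex.exp (-(Complex.I * (((β.arg + (2 * (k : ℝ) + 1) * θ.im : ℝ) : ℂ) - π / 2))) *
        ∫ x : ℝ, (starRingEnd ℂ) (u x) *
          (Complex.exp (-(2 * θ)) * (-(deriv (deriv u) x))
            + Complex.exp (2 * θ) * (x : ℂ) ^ 2 * u x
            + β * Complex.exp ((2 * (k : ℂ) + 1) * θ) * (x : ℂ) ^ (2 * k + 1) * u x)).re := by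
  have hud : ContDiff ℝ ((⊤:ℕ∞):WithTop ℕ∞) (deriv u) := (contDiff_infty_iff_deriv.mp (hu.of_le (by simp))).2
  have hudd : ContDiff ℝ ((⊤:ℕ∞):WithTop ℕ∞) (deriv (deriv u)) := (contDiff_infty_iff_deriv.mp hud).2
  have hcu : Continuous u := hu.continuous
  have hcu' : Continuous (deriv u) := hud.continuous
  have hcu'' : Continuous (deriv (deriv u)) := hudd.continuous
  have hsupp' : HasCompactSupport (deriv u) := hsupp.deriv
  have hcconj : Continuous fun x : ℝ => (starRingEnd ℂ) (u x) :=
    Complex.continuous_conj.comp hcu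
  have hcconj' : Continuous fun x : ℝ => (starRingEnd ℂ) (deriv u x) :=
    Complex.continuous_conj.comp hcu'
  have hsconj : HasCompactSupport fun x : ℝ => (starRingEnd ℂ) (u x) :=
    hsupp.comp_left (by simp)
  have hsconj' : HasCompactSupport fun x : ℝ => (starRingEnd ℂ) (deriv u x) :=
    hsupp'.comp_left (by simp)
  set a : ℝ := β.arg with ha
  set t : ℝ := θ.im with ht
  set c : ℝ := a + (2 * (k : ℝ) + 1) * t with hc
  set E0 : ℂ := Complex.exp (-(Complex.I * ((c : ℂ) - ↑π / 2))) with hE0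
  set E1 : ℂ := Complex.exp (-(2 * θ)) with hE1
  set E2 : ℂ := Complex.exp (2 * θ) with hE2
  set E3 : ℂ := β * Complex.exp ((2 * (k : ℂ) + 1) * θ) with hE3
  set A : ℝ := ∫ x : ℝ, Complex.normSq (deriv u x) with hA
  set B : ℝ := ∫ x : ℝ, x ^ 2 * Complex.normSq (u x) with hB
  set C : ℝ := ∫ x : ℝ, x ^ (2 * k + 1) * Complex.normSq (u x) with hC
  -- integrability facts
  have if1 : Integrable (fun x : ℝ => (starRingEnd ℂ) (u x) * deriv (deriv u) x) := by
    exact (hcconj.mul hcu'').integrable_of_hasCompactSupport hsconj.mul_right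
  have if2 : Integrable (fun x : ℝ => (starRingEnd ℂ) (deriv u x) * deriv u x) := by
    exact (hcconj'.mul hcu').integrable_of_hasCompactSupport hsconj'.mul_right
  have if3 : Integrable (fun x : ℝ => (starRingEnd ℂ) (u x) * deriv u x) := by
    exact (hcconj.mul hcu').integrable_of_hasCompactSupport hsconj.mul_right
  have hns : HasCompactSupport (fun x : ℝ => Complex.normSq (u x)) :=
    hsupp.comp_left (g := Complex.normSq) (by simp)
  have hsg2 : HasCompactSupport (fun x : ℝ => x ^ 2 * Complex.normSq (u x)) :=
    HasCompactSupport.mul_left hns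
  have hsg3 : HasCompactSupport (fun x : ℝ => x ^ (2 * k + 1) * Complex.normSq (u x)) :=
    HasCompactSupport.mul_left hns
  have ig2 : Integrable (fun x : ℝ => ((x ^ 2 * Complex.normSq (u x) : ℝ) : ℂ)) := by
    refine Continuous.integrable_of_hasCompactSupport
      (Complex.continuous_ofReal.comp ((continuous_pow 2).mul
        (Complex.continuous_normSq.comp hcu)))
      (HasCompactSupport.comp_left (g := Complex.ofReal) hsg2 (by simp))
  have ig3 : Integrable (fun x : ℝ => ((x ^ (2 * k + 1) * Complex.normSq (u x) : ℝ) : ℂ)) := by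
    refine Continuous.integrable_of_hasCompactSupport
      (Complex.continuous_ofReal.comp ((continuous_pow (2 * k + 1)).mul
        (Complex.continuous_normSq.comp hcu)))
      (HasCompactSupport.comp_left (g := Complex.ofReal) hsg3 (by simp))
  -- integration by parts
  have ibp : ∫ x : ℝ, (starRingEnd ℂ) (u x) * deriv (deriv u) x
      = - ∫ x : ℝ, (starRingEnd ℂ) (deriv u x) * deriv u x := by
    apply integral_mul_deriv_eq_deriv_mul_of_integrable
      (u := fun x => (starRingEnd ℂ) (u x)) (u' := fun x => (starRingEnd ℂ) (deriv u x))
      (v := deriv u) (v' := deriv (deriv u))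
    · intro x _
      simpa only [starRingEnd_apply] using ((hu.differentiable (by simp) x).hasDerivAt).star
    · intro x _
      exact (hud.differentiable (by simp) x).hasDerivAt
    · exact if1
    · exact if2
    · exact if3
  have hAeq : ∫ x : ℝ, (starRingEnd ℂ) (deriv u x) * deriv u x = (A : ℂ) := by
    rw [hA]
    rw [show ((∫ x : ℝ, Complex.normSq (deriv u x) : ℝ) : ℂ)
        = ∫ x : ℝ, ((Complex.normSq (deriv u x) : ℝ) : ℂ) from integral_ofReal.symm]
    congr 1
    funext x
    rw [mul_comm, Complex.mul_conj]
  -- pointwise rewriting of the integrand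
  have hpt : (fun x : ℝ => (starRingEnd ℂ) (u x) *
          (E1 * (-(deriv (deriv u) x)) + E2 * (x : ℂ) ^ 2 * u x
            + E3 * (x : ℂ) ^ (2 * k + 1) * u x))
      = fun x : ℝ => E1 * (-((starRingEnd ℂ) (u x) * deriv (deriv u) x))
          + (E2 * ((x ^ 2 * Complex.normSq (u x) : ℝ) : ℂ)
            + E3 * ((x ^ (2 * k + 1) * Complex.normSq (u x) : ℝ) : ℂ)) := by
    funext x
    have h : (starRingEnd ℂ) (u x) * u x = (Complex.normSq (u x) : ℂ) := by
      rw [mul_comm, Complex.mul_conj]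
    push_cast
    linear_combination (E2 * (x : ℂ) ^ 2 + E3 * (x : ℂ) ^ (2 * k + 1)) * h
  have key : (∫ x : ℝ, (starRingEnd ℂ) (u x) *
          (E1 * (-(deriv (deriv u) x)) + E2 * (x : ℂ) ^ 2 * u x
            + E3 * (x : ℂ) ^ (2 * k + 1) * u x))
      = E1 * (A : ℂ) + E2 * (B : ℂ) + E3 * (C : ℂ) := by
    have i1 : Integrable (fun x : ℝ =>
        E1 * (-((starRingEnd ℂ) (u x) * deriv (deriv u) x))) := by
      exact (if1.neg).const_mul E1
    have i2 : Integrable (fun x : ℝ => E2 * ((x ^ 2 * Complex.normSq (u x) : ℝ) : ℂ)) := by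
      exact ig2.const_mul E2
    have i3 : Integrable (fun x : ℝ =>
        E3 * ((x ^ (2 * k + 1) * Complex.normSq (u x) : ℝ) : ℂ)) := by
      exact ig3.const_mul E3
    have i23 : Integrable (fun x : ℝ => E2 * ((x ^ 2 * Complex.normSq (u x) : ℝ) : ℂ)
        + E3 * ((x ^ (2 * k + 1) * Complex.normSq (u x) : ℝ) : ℂ)) := by
      exact i2.add i3
    rw [hpt, integral_add i1 i23]
    have hBo : ∫ x : ℝ, ((x ^ 2 * Complex.normSq (u x) : ℝ) : ℂ) = ((B : ℝ) : ℂ) := by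
      rw [hB]; exact (integral_ofReal (𝕜 := ℂ)
        (f := fun x : ℝ => x ^ 2 * Complex.normSq (u x)))
    have hCo : ∫ x : ℝ, ((x ^ (2 * k + 1) * Complex.normSq (u x) : ℝ) : ℂ) = ((C : ℝ) : ℂ) := by
      rw [hC]; exact (integral_ofReal (𝕜 := ℂ)
        (f := fun x : ℝ => x ^ (2 * k + 1) * Complex.normSq (u x)))
    rw [integral_add i2 i3,
      integral_const_mul, integral_const_mul, integral_const_mul, integral_neg, ibp, neg_neg,
      hAeq, hBo, hCo]
    ring
  rw [key]
  have expand : E0 * (E1 * (A : ℂ) + E2 * (B : ℂ) + E3 * (C : ℂ))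
      = (E0 * E1) * (A : ℂ) + (E0 * E2) * (B : ℂ) + (E0 * E3) * (C : ℂ) := by ring
  rw [expand]
  have hmulre : ∀ (z : ℂ) (r : ℝ), (z * (r : ℂ)).re = z.re * r := fun z r => by
    simp [Complex.mul_re]
  rw [Complex.add_re, Complex.add_re, hmulre, hmulre, hmulre]
  have hre1 : (E0 * E1).re
      = Real.exp (-(2 * θ.re)) * Real.sin (a + (2 * (k : ℝ) + 3) * t) := by
    rw [hE0, hE1, ← Complex.exp_add, Complex.exp_re]
    have him : (-(Complex.I * ((c : ℂ) - ↑π / 2)) + -(2 * θ)).im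
        = π / 2 - (a + (2 * (k : ℝ) + 3) * t) := by
      simp [hc, Complex.div_im, Complex.div_re]
      ring
    have hrr : (-(Complex.I * ((c : ℂ) - ↑π / 2)) + -(2 * θ)).re = -(2 * θ.re) := by
      simp [Complex.div_im, Complex.div_re]
    rw [him, hrr, Real.cos_pi_div_two_sub]
  have hre2 : (E0 * E2).re
      = Real.exp (2 * θ.re) * Real.sin (a + (2 * (k : ℝ) - 1) * t) := by
    rw [hE0, hE2, ← Complex.exp_add, Complex.exp_re]
    have him : (-(Complex.I * ((c : ℂ) - ↑π / 2)) + 2 * θ).im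
        = π / 2 - (a + (2 * (k : ℝ) - 1) * t) := by
      simp [hc, Complex.div_im, Complex.div_re]
      ring
    have hrr : (-(Complex.I * ((c : ℂ) - ↑π / 2)) + 2 * θ).re = 2 * θ.re := by
      simp [Complex.div_im, Complex.div_re]
    rw [him, hrr, Real.cos_pi_div_two_sub]
  have hre3 : (E0 * E3).re = 0 := by
    rw [hE0, hE3, ← Complex.norm_mul_exp_arg_mul_I β, ← ha]
    have : Complex.exp (-(Complex.I * ((c : ℂ) - ↑π / 2)))
          * ((↑‖β‖ : ℂ) * Complex.exp (↑a * Complex.I)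
            * Complex.exp ((2 * (k : ℂ) + 1) * θ))
        = (↑‖β‖ : ℂ) * Complex.exp
            (↑a * Complex.I + (2 * (k : ℂ) + 1) * θ + -(Complex.I * ((c : ℂ) - ↑π / 2))) := by
      rw [Complex.exp_add, Complex.exp_add]; ring
    rw [this]
    have him : (↑a * Complex.I + (2 * (k : ℂ) + 1) * θ
        + -(Complex.I * ((c : ℂ) - ↑π / 2))).im = π / 2 := by
      simp [hc, Complex.div_im, Complex.div_re]
      rw [ht]; ring
    simp only [Complex.mul_re, Complex.ofReal_re, Complex.ofReal_im, Complex.exp_re,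
      Complex.exp_im, him, Real.cos_pi_div_two, mul_zero, zero_mul, sub_zero, zero_sub]
  rw [hre1, hre2, hre3]
  have hAnn : 0 ≤ A := integral_nonneg fun x => Complex.normSq_nonneg _
  have hBnn : 0 ≤ B := integral_nonneg fun x => mul_nonneg (sq_nonneg _) (Complex.normSq_nonneg _)
  have hs1 : 0 ≤ Real.sin (a + (2 * (k : ℝ) + 3) * t) :=
    Real.sin_nonneg_of_nonneg_of_le_pi h1.le h2.le
  have hs2 : 0 ≤ Real.sin (a + (2 * (k : ℝ) - 1) * t) :=
    Real.sin_nonneg_of_nonneg_of_le_pi h3.le h4.le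
  have := mul_nonneg (mul_nonneg (Real.exp_pos (-(2 * θ.re))).le hs1) hAnn
  have := mul_nonneg (mul_nonneg (Real.exp_pos (2 * θ.re)).le hs2) hBnn
  nlinarith [mul_nonneg (mul_nonneg (Real.exp_pos (-(2 * θ.re))).le hs1) hAnn,
    mul_nonneg (mul_nonneg (Real.exp_pos (2 * θ.re)).le hs2) hBnn]
end

section
/- Let k ≥ 1 be an integer and s, t ∈ ℝ satisfy 0 < s + (2k+3)t < π and 0 < s + (2k−1)t < π. Then there exists c > 0 (depending only on k, s, t) such that for every ρ > 0 and every smooth compactly supported u : ℝ → ℂ: ∫_ℝ ( |u(x)|² + |u'(x)|² ) dx ≤ c·( ‖K(ρ)u‖ + ‖u‖ )², where (K(ρ)u)(x) = −u''(x) + e^{4it} x² u(x) + ρ e^{i(s+(2k+3)t)} x^{2k+1} u(x) and ‖·‖ is the L² norm on ℝ. -/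
open MeasureTheory
open scoped Real

/-- auxiliary: `(I * exp(θi) * r).re = -sin θ * r` for real `θ, r`. -/
lemma re_I_exp_mul (θ r : ℝ) :
    (Complex.I * Complex.exp ((θ : ℂ) * Complex.I) * (r : ℂ)).re = -Real.sin θ * r := by
  simp [Complex.mul_re, Complex.exp_ofReal_mul_I_re, Complex.exp_ofReal_mul_I_im]

/-- auxiliary real-part computation. -/
lemma re_key (a τ A B r w : ℝ) :
    (Complex.I * Complex.exp (((-a : ℝ) : ℂ) * Complex.I)
      * (((A : ℝ) : ℂ) + (Complex.exp (((4 * τ : ℝ) : ℂ) * Complex.I) * ((B : ℝ) : ℂ)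
        + ((r : ℝ) : ℂ) * Complex.exp (((a : ℝ) : ℂ) * Complex.I) * ((w : ℝ) : ℂ)))).re
    = Real.sin a * A + Real.sin (a - 4 * τ) * B := by
  have hEE : Complex.exp (((-a : ℝ) : ℂ) * Complex.I)
      * Complex.exp (((a : ℝ) : ℂ) * Complex.I) = 1 := by
    rw [← Complex.exp_add, show (((-a : ℝ) : ℂ) * Complex.I + ((a : ℝ) : ℂ) * Complex.I) = 0
      by push_cast; ring, Complex.exp_zero]
  have t2 : Complex.I * Complex.exp (((-a : ℝ) : ℂ) * Complex.I)
      * (Complex.exp (((4 * τ : ℝ) : ℂ) * Complex.I) * ((B : ℝ) : ℂ))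
      = Complex.I * Complex.exp ((((-a) + 4 * τ : ℝ) : ℂ) * Complex.I) * ((B : ℝ) : ℂ) := by
    rw [Complex.ofReal_add, add_mul, Complex.exp_add]; ring
  have t3 : Complex.I * Complex.exp (((-a : ℝ) : ℂ) * Complex.I)
      * (((r : ℝ) : ℂ) * Complex.exp (((a : ℝ) : ℂ) * Complex.I) * ((w : ℝ) : ℂ))
      = ((r : ℝ) : ℂ) * ((w : ℝ) : ℂ) * Complex.I := by
    rw [show Complex.I * Complex.exp (((-a : ℝ) : ℂ) * Complex.I)
        * (((r : ℝ) : ℂ) * Complex.exp (((a : ℝ) : ℂ) * Complex.I) * ((w : ℝ) : ℂ))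
        = Complex.exp (((-a : ℝ) : ℂ) * Complex.I) * Complex.exp (((a : ℝ) : ℂ) * Complex.I)
          * (((r : ℝ) : ℂ) * ((w : ℝ) : ℂ) * Complex.I) by ring, hEE, one_mul]
  rw [mul_add, mul_add, Complex.add_re, Complex.add_re, t2, t3, re_I_exp_mul, re_I_exp_mul]
  have h0 : ((((r : ℝ) : ℂ) * ((w : ℝ) : ℂ) * Complex.I)).re = 0 := by simp
  rw [h0, Real.sin_neg, show (-a) + 4 * τ = -(a - 4 * τ) by ring, Real.sin_neg]
  ring

/-- auxiliary Cauchy–Schwarz for continuous compactly supported nonneg functions. -/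
lemma cs_aux {f g : ℝ → ℝ} (hf : Continuous f) (hf' : HasCompactSupport f)
    (hg : Continuous g) (hg' : HasCompactSupport g)
    (hfn : ∀ x, 0 ≤ f x) (hgn : ∀ x, 0 ≤ g x) :
    ∫ x : ℝ, f x * g x ≤ Real.sqrt (∫ x : ℝ, f x ^ 2) * Real.sqrt (∫ x : ℝ, g x ^ 2) := by
  have hpq : Real.HolderConjugate 2 2 := Real.HolderConjugate.two_two
  have hmf : MemLp f (ENNReal.ofReal 2) := hf.memLp_of_hasCompactSupport hf'
  have hmg : MemLp g (ENNReal.ofReal 2) := hg.memLp_of_hasCompactSupport hg'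
  have H := MeasureTheory.integral_mul_le_Lp_mul_Lq_of_nonneg hpq
    (Filter.Eventually.of_forall hfn) (Filter.Eventually.of_forall hgn) hmf hmg
  have e1 : ∀ (h : ℝ → ℝ), (∫ x : ℝ, h x ^ (2:ℝ)) = ∫ x : ℝ, h x ^ 2 := by
    intro h
    simp only [show ((2:ℝ)) = ((2:ℕ):ℝ) by norm_num, Real.rpow_natCast]
  rw [e1 f, e1 g] at H
  have hif : 0 ≤ ∫ x : ℝ, f x ^ 2 := integral_nonneg fun x => sq_nonneg _
  have hig : 0 ≤ ∫ x : ℝ, g x ^ 2 := integral_nonneg fun x => sq_nonneg _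
  refine H.trans (le_of_eq ?_)
  rw [Real.sqrt_eq_rpow, Real.sqrt_eq_rpow]

/-- auxiliary: `z * conj z = ‖z‖²` with `Complex.ofReal` coercion. -/
lemma mul_conj_norm_sq (z : ℂ) : z * (starRingEnd ℂ) z = ((‖z‖ ^ 2 : ℝ) : ℂ) := by
  rw [Complex.mul_conj, Complex.normSq_eq_norm_sq]

/-- Estimate (2.13): `‖(1+p²)^{1/2}u‖² ≤ c(‖K(ρ)u‖ + ‖u‖)²` uniformly in the coupling
strength `ρ > 0`, for the scaled dilated odd anharmonic oscillator
`K(ρ) = p² + e^{4it}x² + ρe^{i(s+(2k+3)t)}x^{2k+1}`. -/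
theorem uniform_Sobolev_estimate_K
    (k : ℕ) (hk : 1 ≤ k) (s t : ℝ)
    (h1 : 0 < s + (2 * (k : ℝ) + 3) * t) (h2 : s + (2 * (k : ℝ) + 3) * t < π)
    (h3 : 0 < s + (2 * (k : ℝ) - 1) * t) (h4 : s + (2 * (k : ℝ) - 1) * t < π) :
    ∃ c > (0:ℝ), ∀ ρ : ℝ, 0 < ρ →
      ∀ u : ℝ → ℂ, ContDiff ℝ (⊤ : ℕ∞) u → HasCompactSupport u →
        (∫ x : ℝ, (‖u x‖ ^ 2 + ‖deriv u x‖ ^ 2))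
          ≤ c * (Real.sqrt (∫ x : ℝ, ‖-(deriv (deriv u) x)
                + Complex.exp (4 * Complex.I * t) * (x : ℂ) ^ 2 * u x
                + (ρ : ℂ) * Complex.exp (Complex.I * ((s : ℂ) + (2 * (k : ℂ) + 3) * t))
                  * (x : ℂ) ^ (2 * k + 1) * u x‖ ^ 2)
              + Real.sqrt (∫ x : ℝ, ‖u x‖ ^ 2)) ^ 2 := by
  set α : ℝ := s + (2 * (k : ℝ) + 3) * t with hα
  set β : ℝ := s + (2 * (k : ℝ) - 1) * t with hβ
  have hsinα : 0 < Real.sin α := Real.sin_pos_of_pos_of_lt_pi h1 h2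
  have hsinβ : 0 < Real.sin β := Real.sin_pos_of_pos_of_lt_pi h3 h4
  have hβα : β = α - 4 * t := by rw [hα, hβ]; ring
  refine ⟨1 + (Real.sin α)⁻¹, by positivity, ?_⟩
  intro ρ hρ u hu hcs
  -- basic regularity facts
  have huω : ContDiff ℝ (⊤ : ℕ∞) u := hu.of_le (by simp)
  have hdiff : Differentiable ℝ u := (contDiff_infty_iff_deriv.mp huω).1
  have hu1 : ContDiff ℝ (⊤ : ℕ∞) (deriv u) := (contDiff_infty_iff_deriv.mp huω).2
  have hdiff1 : Differentiable ℝ (deriv u) := (contDiff_infty_iff_deriv.mp hu1).1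
  have hu2 : ContDiff ℝ (⊤ : ℕ∞) (deriv (deriv u)) := (contDiff_infty_iff_deriv.mp hu1).2
  have hcu : Continuous u := hu.continuous
  have hcu1 : Continuous (deriv u) := hu1.continuous
  have hcu2 : Continuous (deriv (deriv u)) := hu2.continuous
  have hcs1 : HasCompactSupport (deriv u) := hcs.deriv
  have hcs2 : HasCompactSupport (deriv (deriv u)) := hcs1.deriv
  set Ku : ℝ → ℂ := fun x => -(deriv (deriv u) x)
      + Complex.exp (4 * Complex.I * t) * (x : ℂ) ^ 2 * u x
      + (ρ : ℂ) * Complex.exp (Complex.I * ((s : ℂ) + (2 * (k : ℂ) + 3) * t))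
        * (x : ℂ) ^ (2 * k + 1) * u x with hKu
  have hKgoal : ∀ x : ℝ, (-(deriv (deriv u) x)
      + Complex.exp (4 * Complex.I * t) * (x : ℂ) ^ 2 * u x
      + (ρ : ℂ) * Complex.exp (Complex.I * ((s : ℂ) + (2 * (k : ℂ) + 3) * t))
        * (x : ℂ) ^ (2 * k + 1) * u x) = Ku x := fun x => by rw [hKu]
  simp only [hKgoal]
  have hcKu : Continuous Ku := by
    rw [hKu]; fun_prop
  have hcsKu : HasCompactSupport Ku := by
    rw [hKu]
    apply HasCompactSupport.add
    apply HasCompactSupport.add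
    · exact HasCompactSupport.neg hcs2
    · exact HasCompactSupport.mul_left hcs
    · exact HasCompactSupport.mul_left hcs
  -- normalizations of the exponentials
  have hexp1 : Complex.exp (4 * Complex.I * t)
      = Complex.exp (((4 * t : ℝ) : ℂ) * Complex.I) := by
    push_cast; ring_nf
  have hexp2 : Complex.exp (Complex.I * ((s : ℂ) + (2 * (k : ℂ) + 3) * t))
      = Complex.exp (((α : ℝ) : ℂ) * Complex.I) := by
    rw [hα]; push_cast; ring_nf
  -- abbreviations for the real quantities
  set A : ℝ := ∫ x : ℝ, ‖deriv u x‖ ^ 2 with hA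
  set B : ℝ := ∫ x : ℝ, x ^ 2 * ‖u x‖ ^ 2 with hB
  set W : ℝ := ∫ x : ℝ, x ^ (2 * k + 1) * ‖u x‖ ^ 2 with hW
  set M2 : ℝ := ∫ x : ℝ, ‖u x‖ ^ 2 with hM2
  set N : ℝ := Real.sqrt (∫ x : ℝ, ‖Ku x‖ ^ 2) with hN
  set M : ℝ := Real.sqrt M2 with hM
  set z : ℂ := ∫ x : ℝ, Ku x * (starRingEnd ℂ) (u x) with hz
  have int_cc : ∀ (f : ℝ → ℂ), Continuous f → HasCompactSupport f → Integrable f :=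
    fun f hf hf' => hf.integrable_of_hasCompactSupport hf'
  -- integration by parts
  have parts : (∫ x : ℝ, deriv u x * (starRingEnd ℂ) (deriv u x))
      = - ∫ x : ℝ, deriv (deriv u) x * (starRingEnd ℂ) (u x) := by
    have h1' : ∀ x : ℝ, HasDerivAt (deriv u) (deriv (deriv u) x) x :=
      fun x => (hdiff1 x).hasDerivAt
    have h2' : ∀ x : ℝ, HasDerivAt (fun y => (starRingEnd ℂ) (u y))
        ((starRingEnd ℂ) (deriv u x)) x := by
      intro x
      simpa using ((hdiff x).hasDerivAt).star
    exact MeasureTheory.integral_mul_deriv_eq_deriv_mul_of_integrable (fun x _ => h1' x) (fun x _ => h2' x)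
      (int_cc _ (hcu1.mul (Complex.continuous_conj.comp hcu1)) (HasCompactSupport.mul_right hcs1))
      (int_cc _ (hcu2.mul (Complex.continuous_conj.comp hcu)) (HasCompactSupport.mul_right hcs2))
      (int_cc _ (hcu1.mul (Complex.continuous_conj.comp hcu)) (HasCompactSupport.mul_right hcs1))
  -- pointwise expansion of the integrand
  have hsplit : ∀ x : ℝ, Ku x * (starRingEnd ℂ) (u x)
      = (-(deriv (deriv u) x)) * (starRingEnd ℂ) (u x)
        + (Complex.exp (((4 * t : ℝ) : ℂ) * Complex.I)
            * ((x : ℂ) ^ 2 * (u x * (starRingEnd ℂ) (u x)))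
          + (ρ : ℂ) * Complex.exp (((α : ℝ) : ℂ) * Complex.I)
            * ((x : ℂ) ^ (2 * k + 1) * (u x * (starRingEnd ℂ) (u x)))) := by
    intro x
    rw [hKu]
    simp only [hexp1, hexp2]
    ring
  -- the three integrals
  have intf1 : Integrable (fun x : ℝ => (-(deriv (deriv u) x)) * (starRingEnd ℂ) (u x)) :=
    int_cc _ ((hcu2.neg).mul (Complex.continuous_conj.comp hcu))
      (HasCompactSupport.mul_right (HasCompactSupport.neg hcs2))
  have intf2 : Integrable (fun x : ℝ => Complex.exp (((4 * t : ℝ) : ℂ) * Complex.I)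
      * ((x : ℂ) ^ 2 * (u x * (starRingEnd ℂ) (u x)))) :=
    int_cc _ (continuous_const.mul ((Complex.continuous_ofReal.pow 2).mul
        (hcu.mul (Complex.continuous_conj.comp hcu))))
      (HasCompactSupport.mul_left (HasCompactSupport.mul_left (HasCompactSupport.mul_right hcs)))
  have intf3 : Integrable (fun x : ℝ => (ρ : ℂ) * Complex.exp (((α : ℝ) : ℂ) * Complex.I)
      * ((x : ℂ) ^ (2 * k + 1) * (u x * (starRingEnd ℂ) (u x)))) :=
    int_cc _ (continuous_const.mul ((Complex.continuous_ofReal.pow (2 * k + 1)).mul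
        (hcu.mul (Complex.continuous_conj.comp hcu))))
      (HasCompactSupport.mul_left (HasCompactSupport.mul_left (HasCompactSupport.mul_right hcs)))
  have i1 : (∫ x : ℝ, (-(deriv (deriv u) x)) * (starRingEnd ℂ) (u x)) = ((A : ℝ) : ℂ) := by
    have : (∫ x : ℝ, (-(deriv (deriv u) x)) * (starRingEnd ℂ) (u x))
        = - ∫ x : ℝ, deriv (deriv u) x * (starRingEnd ℂ) (u x) := by
      simp only [neg_mul]
      exact integral_neg _
    rw [this, ← parts]
    have e : ∀ x : ℝ, deriv u x * (starRingEnd ℂ) (deriv u x)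
        = ((‖deriv u x‖ ^ 2 : ℝ) : ℂ) := by
      intro x
      rw [mul_conj_norm_sq]
    simp only [e]
    rw [hA]
    exact integral_ofReal
  have i2 : (∫ x : ℝ, Complex.exp (((4 * t : ℝ) : ℂ) * Complex.I)
      * ((x : ℂ) ^ 2 * (u x * (starRingEnd ℂ) (u x))))
      = Complex.exp (((4 * t : ℝ) : ℂ) * Complex.I) * ((B : ℝ) : ℂ) := by
    rw [integral_const_mul]
    congr 1
    have e : ∀ x : ℝ, (x : ℂ) ^ 2 * (u x * (starRingEnd ℂ) (u x))
        = ((x ^ 2 * ‖u x‖ ^ 2 : ℝ) : ℂ) := by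
      intro x
      rw [mul_conj_norm_sq]
      push_cast
      ring
    simp only [e]
    rw [hB]
    exact integral_ofReal
  have i3 : (∫ x : ℝ, (ρ : ℂ) * Complex.exp (((α : ℝ) : ℂ) * Complex.I)
      * ((x : ℂ) ^ (2 * k + 1) * (u x * (starRingEnd ℂ) (u x))))
      = (ρ : ℂ) * Complex.exp (((α : ℝ) : ℂ) * Complex.I) * ((W : ℝ) : ℂ) := by
    rw [integral_const_mul]
    congr 1
    have e : ∀ x : ℝ, (x : ℂ) ^ (2 * k + 1) * (u x * (starRingEnd ℂ) (u x))
        = ((x ^ (2 * k + 1) * ‖u x‖ ^ 2 : ℝ) : ℂ) := by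
      intro x
      rw [mul_conj_norm_sq]
      push_cast
      ring
    simp only [e]
    rw [hW]
    exact integral_ofReal
  have hz_eq : z = ((A : ℝ) : ℂ)
      + (Complex.exp (((4 * t : ℝ) : ℂ) * Complex.I) * ((B : ℝ) : ℂ)
        + (ρ : ℂ) * Complex.exp (((α : ℝ) : ℂ) * Complex.I) * ((W : ℝ) : ℂ)) := by
    have intf23 : Integrable (fun x : ℝ => Complex.exp (((4 * t : ℝ) : ℂ) * Complex.I)
        * ((x : ℂ) ^ 2 * (u x * (starRingEnd ℂ) (u x)))
        + (ρ : ℂ) * Complex.exp (((α : ℝ) : ℂ) * Complex.I)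
          * ((x : ℂ) ^ (2 * k + 1) * (u x * (starRingEnd ℂ) (u x)))) := intf2.add intf3
    rw [hz]
    simp only [hsplit]
    rw [integral_add intf1 intf23, integral_add intf2 intf3, i1, i2, i3]
  -- real part computation
  have hre : (Complex.I * Complex.exp (((-α : ℝ) : ℂ) * Complex.I) * z).re
      = Real.sin α * A + Real.sin β * B := by
    rw [hz_eq, re_key α t A B ρ W, hβα]
  -- |z| bound via Cauchy–Schwarz
  have habs : ‖z‖ ≤ N * M := by
    have step1 : ‖z‖ ≤ ∫ x : ℝ, ‖Ku x * (starRingEnd ℂ) (u x)‖ := by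
      rw [hz]
      exact norm_integral_le_integral_norm _
    have step2 : (∫ x : ℝ, ‖Ku x * (starRingEnd ℂ) (u x)‖)
        = ∫ x : ℝ, ‖Ku x‖ * ‖u x‖ := by
      refine integral_congr_ae (Filter.Eventually.of_forall fun x => ?_)
      simp [norm_mul, RCLike.norm_conj]
    have step3 := cs_aux (f := fun x => ‖Ku x‖) (g := fun x => ‖u x‖)
      hcKu.norm hcsKu.norm hcu.norm hcs.norm
      (fun x => norm_nonneg _) (fun x => norm_nonneg _)
    calc ‖z‖ ≤ ∫ x : ℝ, ‖Ku x * (starRingEnd ℂ) (u x)‖ := step1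
      _ = ∫ x : ℝ, ‖Ku x‖ * ‖u x‖ := step2
      _ ≤ N * M := by rw [hN, hM, hM2]; exact step3
  -- putting everything together
  have hreabs : Real.sin α * A + Real.sin β * B ≤ N * M := by
    calc Real.sin α * A + Real.sin β * B
        = (Complex.I * Complex.exp (((-α : ℝ) : ℂ) * Complex.I) * z).re := hre.symm
      _ ≤ ‖Complex.I * Complex.exp (((-α : ℝ) : ℂ) * Complex.I) * z‖ :=
          Complex.re_le_norm _
      _ = ‖z‖ := by
          rw [norm_mul, norm_mul, Complex.norm_I, Complex.norm_exp_ofReal_mul_I]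
          ring
      _ = ‖z‖ := rfl
      _ ≤ N * M := habs
  have hBnn : 0 ≤ B := integral_nonneg fun x => by positivity
  have hAle : Real.sin α * A ≤ N * M := by nlinarith [mul_nonneg hsinβ.le hBnn]
  have hNnn : 0 ≤ N := Real.sqrt_nonneg _
  have hMnn : 0 ≤ M := Real.sqrt_nonneg _
  have hM2nn : 0 ≤ M2 := integral_nonneg fun x => sq_nonneg _
  have hMsq : M ^ 2 = M2 := Real.sq_sqrt hM2nn
  -- split the left-hand side
  have intn1 : Integrable (fun x : ℝ => ‖u x‖ ^ 2) := by
    refine Continuous.integrable_of_hasCompactSupport (by fun_prop) ?_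
    exact hcs.comp_left (g := fun z : ℂ => ‖z‖ ^ 2) (by simp)
  have intn2 : Integrable (fun x : ℝ => ‖deriv u x‖ ^ 2) := by
    refine Continuous.integrable_of_hasCompactSupport (by fun_prop) ?_
    exact hcs1.comp_left (g := fun z : ℂ => ‖z‖ ^ 2) (by simp)
  have hLHS : (∫ x : ℝ, (‖u x‖ ^ 2 + ‖deriv u x‖ ^ 2)) = M2 + A := by
    rw [integral_add intn1 intn2, hM2, hA]
  rw [hLHS]
  have hsinv : 0 < (Real.sin α)⁻¹ := by positivity
  have hAle' : A ≤ (Real.sin α)⁻¹ * (N * M) := by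
    calc A = (Real.sin α)⁻¹ * (Real.sin α * A) := by
          field_simp
      _ ≤ (Real.sin α)⁻¹ * (N * M) := mul_le_mul_of_nonneg_left hAle hsinv.le
  nlinarith [sq_nonneg (N + M), mul_nonneg hNnn hMnn, sq_nonneg N, sq_nonneg M,
    mul_nonneg (mul_nonneg hsinv.le hNnn) hMnn]
end

section
/- Let k ≥ 1 be an integer and s, t ∈ ℝ satisfy 0 < s + (2k+3)t < π and 0 < s + (2k−1)t < π; set α = s + (2k+3)t and let (K(ρ)u)(x) = −u''(x) + e^{4it} x² u(x) + ρ e^{iα} x^{2k+1} u(x) for ρ > 0. Then for every n ≥ 1 and every smooth compactly supported u : ℝ → ℂ that vanishes on the interval (−n, n): Re[ e^{i(π/2 − α)} ⟨u, K(ρ)u⟩ ] ≥ sin(s + (2k−1)t)·∫_ℝ x²|u(x)|² dx ≥ n²·sin(s + (2k−1)t)·‖u‖², where ⟨u,v⟩ = ∫_ℝ conj(u(x))v(x) dx and ‖·‖ is the L² norm. -/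
open MeasureTheory
open scoped Real ContDiff

private lemma conj_mul_self' (z : ℂ) : (starRingEnd ℂ) z * z = ((‖z‖ ^ 2 : ℝ) : ℂ) := by
  rw [mul_comm, Complex.mul_conj']; push_cast; ring

/-- Integration by parts: `∫ conj u · (−u'') = ∫ ‖u'‖²` for smooth compactly supported `u`. -/
private lemma ibp_aux (u : ℝ → ℂ) (hu : ContDiff ℝ (⊤ : ℕ∞) u) (hsupp : HasCompactSupport u) :
    ∫ x : ℝ, (starRingEnd ℂ) (u x) * (-(deriv (deriv u) x)) =
      (((∫ x : ℝ, ‖deriv u x‖ ^ 2) : ℝ) : ℂ) := by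
  have huI : ContDiff ℝ ∞ u := hu.of_le (by simp)
  have hv : ContDiff ℝ ∞ (deriv u) := (contDiff_infty_iff_deriv.mp huI).2
  have hud : Differentiable ℝ u := huI.differentiable (by norm_num)
  have hvd : Differentiable ℝ (deriv u) := hv.differentiable (by norm_num)
  have hvsupp : HasCompactSupport (deriv u) := hsupp.deriv
  set f : ℝ → ℂ := fun x => (starRingEnd ℂ) (u x) * deriv u x with hf_def
  have hfc : ContDiff ℝ 1 f :=
    (Complex.conjCLE.contDiff.comp (hu.of_le (by simp))).mul (hv.of_le (by exact_mod_cast le_top))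
  have hfs : HasCompactSupport f :=
    (hsupp.comp_left (g := starRingEnd ℂ) (by simp)).mul_right
  have hderiv : ∀ x : ℝ, HasDerivAt f
      ((starRingEnd ℂ) (deriv u x) * deriv u x
        + (starRingEnd ℂ) (u x) * deriv (deriv u) x) x := by
    intro x
    exact ((hud x).hasDerivAt.star.mul (hvd x).hasDerivAt)
  have hdf : deriv f = fun x => (starRingEnd ℂ) (deriv u x) * deriv u x
      + (starRingEnd ℂ) (u x) * deriv (deriv u) x := funext fun x => (hderiv x).deriv
  have hint : Integrable (deriv f) :=
    (hfc.continuous_deriv le_rfl).integrable_of_hasCompactSupport hfs.deriv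
  have h0 : (∫ x : ℝ, deriv f x) = 0 := by
    rw [← intervalIntegral.integral_Iic_add_Ioi (b := 0) hint.integrableOn hint.integrableOn,
      HasCompactSupport.integral_Iic_deriv_eq hfc hfs 0,
      HasCompactSupport.integral_Ioi_deriv_eq hfc hfs 0]
    ring
  rw [hdf] at h0
  have hcu : Continuous u := hu.continuous
  have hcv : Continuous (deriv u) := hv.continuous
  have hcvv : Continuous (deriv (deriv u)) := hv.continuous_deriv (by norm_num)
  have hI1 : Integrable (fun x : ℝ => (starRingEnd ℂ) (deriv u x) * deriv u x) :=
    ((Complex.continuous_conj.comp hcv).mul hcv).integrable_of_hasCompactSupport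
      ((hvsupp.comp_left (g := starRingEnd ℂ) (by simp)).mul_right)
  have hI2 : Integrable (fun x : ℝ => (starRingEnd ℂ) (u x) * deriv (deriv u) x) :=
    ((Complex.continuous_conj.comp hcu).mul hcvv).integrable_of_hasCompactSupport
      ((hsupp.comp_left (g := starRingEnd ℂ) (by simp)).mul_right)
  have h0' : (∫ x : ℝ, (starRingEnd ℂ) (deriv u x) * deriv u x)
      + (∫ x : ℝ, (starRingEnd ℂ) (u x) * deriv (deriv u) x) = 0 := by
    rw [← integral_add hI1 hI2]; exact h0
  have h1 : (∫ x : ℝ, (starRingEnd ℂ) (deriv u x) * deriv u x)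
      = (((∫ x : ℝ, ‖deriv u x‖ ^ 2) : ℝ) : ℂ) := by
    simp_rw [conj_mul_self']
    exact integral_ofReal
  have h2 : (∫ x : ℝ, (starRingEnd ℂ) (u x) * (-(deriv (deriv u) x)))
      = -∫ x : ℝ, (starRingEnd ℂ) (u x) * deriv (deriv u) x := by
    simp_rw [mul_neg]
    exact integral_neg _
  rw [h2]
  rw [h1] at h0'
  linear_combination -h0'

/-- Exterior positivity estimate from the proof of Theorem 2.8(c)(3): for `u` supported
outside `(−n, n)`, the rotated quadratic form of `K(ρ)` dominates
`sin(s+(2k−1)t)·‖xu‖² ≥ n² sin(s+(2k−1)t)·‖u‖²`. -/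
theorem exterior_positivity_K
    (k : ℕ) (hk : 1 ≤ k) (s t : ℝ)
    (h1 : 0 < s + (2 * (k : ℝ) + 3) * t) (h2 : s + (2 * (k : ℝ) + 3) * t < π)
    (h3 : 0 < s + (2 * (k : ℝ) - 1) * t) (h4 : s + (2 * (k : ℝ) - 1) * t < π)
    (α : ℝ) (hα : α = s + (2 * (k : ℝ) + 3) * t)
    (ρ : ℝ) (hρ : 0 < ρ) (n : ℕ) (hn : 1 ≤ n)
    (u : ℝ → ℂ) (hu : ContDiff ℝ (⊤ : ℕ∞) u) (hsupp : HasCompactSupport u)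
    (hvanish : ∀ x ∈ Set.Ioo (-(n : ℝ)) (n : ℝ), u x = 0) :
    Real.sin (s + (2 * (k : ℝ) - 1) * t) * (∫ x : ℝ, x ^ 2 * ‖u x‖ ^ 2)
        ≤ (Complex.exp (Complex.I * ((π : ℂ) / 2 - α)) *
            ∫ x : ℝ, (starRingEnd ℂ) (u x) *
              (-(deriv (deriv u) x) + Complex.exp (4 * Complex.I * t) * (x : ℂ) ^ 2 * u x
                + (ρ : ℂ) * Complex.exp (Complex.I * α) * (x : ℂ) ^ (2 * k + 1) * u x)).re
    ∧ (n : ℝ) ^ 2 * Real.sin (s + (2 * (k : ℝ) - 1) * t) * (∫ x : ℝ, ‖u x‖ ^ 2)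
        ≤ Real.sin (s + (2 * (k : ℝ) - 1) * t) * (∫ x : ℝ, x ^ 2 * ‖u x‖ ^ 2) := by
  have hcu : Continuous u := hu.continuous
  have hnsupp : HasCompactSupport (fun x : ℝ => ‖u x‖ ^ 2) :=
    hsupp.comp_left (g := fun z : ℂ => ‖z‖ ^ 2) (by simp)
  have hncont : Continuous (fun x : ℝ => ‖u x‖ ^ 2) := (hcu.norm).pow 2
  have hIN : Integrable (fun x : ℝ => ‖u x‖ ^ 2) :=
    hncont.integrable_of_hasCompactSupport hnsupp
  have hIX : Integrable (fun x : ℝ => x ^ 2 * ‖u x‖ ^ 2) :=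
    ((continuous_pow 2).mul hncont).integrable_of_hasCompactSupport hnsupp.mul_left
  have hIJ : Integrable (fun x : ℝ => x ^ (2 * k + 1) * ‖u x‖ ^ 2) :=
    ((continuous_pow _).mul hncont).integrable_of_hasCompactSupport hnsupp.mul_left
  set σ := Real.sin (s + (2 * (k : ℝ) - 1) * t) with hσ
  have hσpos : 0 < σ := Real.sin_pos_of_pos_of_lt_pi h3 h4
  set X := ∫ x : ℝ, x ^ 2 * ‖u x‖ ^ 2 with hX
  set D := ∫ x : ℝ, ‖deriv u x‖ ^ 2 with hD
  set J := ∫ x : ℝ, x ^ (2 * k + 1) * ‖u x‖ ^ 2 with hJ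
  have hDpos : 0 ≤ D := integral_nonneg fun x => sq_nonneg _
  constructor
  · -- main estimate
    have hv : ContDiff ℝ ∞ (deriv u) := (contDiff_infty_iff_deriv.mp (hu.of_le (by simp))).2
    have hcvv : Continuous (deriv (deriv u)) := hv.continuous_deriv (by norm_num)
    have hpt : ∀ x : ℝ, (starRingEnd ℂ) (u x) *
        (-(deriv (deriv u) x) + Complex.exp (4 * Complex.I * t) * (x : ℂ) ^ 2 * u x
          + (ρ : ℂ) * Complex.exp (Complex.I * α) * (x : ℂ) ^ (2 * k + 1) * u x)
        = (starRingEnd ℂ) (u x) * (-(deriv (deriv u) x))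
          + Complex.exp (4 * Complex.I * t) * (((x ^ 2 * ‖u x‖ ^ 2 : ℝ)) : ℂ)
          + (ρ : ℂ) * Complex.exp (Complex.I * α) * (((x ^ (2 * k + 1) * ‖u x‖ ^ 2 : ℝ)) : ℂ) := by
      intro x
      have h := conj_mul_self' (u x)
      push_cast at h ⊢
      linear_combination (Complex.exp (4 * Complex.I * t) * (x : ℂ) ^ 2
        + (ρ : ℂ) * Complex.exp (Complex.I * α) * (x : ℂ) ^ (2 * k + 1)) * h
    have hIA : Integrable (fun x : ℝ => (starRingEnd ℂ) (u x) * (-(deriv (deriv u) x))) :=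
      ((Complex.continuous_conj.comp hcu).mul hcvv.neg).integrable_of_hasCompactSupport
        ((hsupp.comp_left (g := starRingEnd ℂ) (by simp)).mul_right)
    have hIB : Integrable (fun x : ℝ =>
        Complex.exp (4 * Complex.I * t) * (((x ^ 2 * ‖u x‖ ^ 2 : ℝ)) : ℂ)) :=
      (hIX.ofReal.const_mul _)
    have hIC : Integrable (fun x : ℝ =>
        (ρ : ℂ) * Complex.exp (Complex.I * α) * (((x ^ (2 * k + 1) * ‖u x‖ ^ 2 : ℝ)) : ℂ)) :=
      (hIJ.ofReal.const_mul _)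
    have hstep1 : (∫ x : ℝ, ((starRingEnd ℂ) (u x) * (-(deriv (deriv u) x))
          + Complex.exp (4 * Complex.I * t) * (((x ^ 2 * ‖u x‖ ^ 2 : ℝ)) : ℂ))
          + (ρ : ℂ) * Complex.exp (Complex.I * α) * (((x ^ (2 * k + 1) * ‖u x‖ ^ 2 : ℝ)) : ℂ))
        = (∫ x : ℝ, ((starRingEnd ℂ) (u x) * (-(deriv (deriv u) x))
          + Complex.exp (4 * Complex.I * t) * (((x ^ 2 * ‖u x‖ ^ 2 : ℝ)) : ℂ)))
          + ∫ x : ℝ, (ρ : ℂ) * Complex.exp (Complex.I * α)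
              * (((x ^ (2 * k + 1) * ‖u x‖ ^ 2 : ℝ)) : ℂ) :=
      integral_add (hIA.add hIB) hIC
    have hstep2 : (∫ x : ℝ, ((starRingEnd ℂ) (u x) * (-(deriv (deriv u) x))
          + Complex.exp (4 * Complex.I * t) * (((x ^ 2 * ‖u x‖ ^ 2 : ℝ)) : ℂ)))
        = (∫ x : ℝ, (starRingEnd ℂ) (u x) * (-(deriv (deriv u) x)))
          + ∫ x : ℝ, Complex.exp (4 * Complex.I * t) * (((x ^ 2 * ‖u x‖ ^ 2 : ℝ)) : ℂ) :=
      integral_add hIA hIB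
    have hsplit : (∫ x : ℝ, (starRingEnd ℂ) (u x) *
        (-(deriv (deriv u) x) + Complex.exp (4 * Complex.I * t) * (x : ℂ) ^ 2 * u x
          + (ρ : ℂ) * Complex.exp (Complex.I * α) * (x : ℂ) ^ (2 * k + 1) * u x))
        = ((D : ℝ) : ℂ) + Complex.exp (4 * Complex.I * t) * ((X : ℝ) : ℂ)
          + (ρ : ℂ) * Complex.exp (Complex.I * α) * ((J : ℝ) : ℂ) := by
      rw [integral_congr_ae (Filter.Eventually.of_forall hpt), hstep1, hstep2,
        ibp_aux u hu hsupp, integral_const_mul, integral_const_mul,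
        show (∫ a : ℝ, ((a ^ 2 * ‖u a‖ ^ 2 : ℝ) : ℂ)) = ((X : ℝ) : ℂ) from integral_ofReal,
        show (∫ a : ℝ, ((a ^ (2 * k + 1) * ‖u a‖ ^ 2 : ℝ) : ℂ)) = ((J : ℝ) : ℂ) from
          integral_ofReal]
    rw [hsplit]
    have e1 : Complex.exp (Complex.I * ((π : ℂ) / 2 - α)) =
        Complex.exp (((π / 2 - α : ℝ) : ℂ) * Complex.I) := by push_cast; ring_nf
    have e2 : Complex.exp (Complex.I * ((π : ℂ) / 2 - α)) * Complex.exp (4 * Complex.I * t) =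
        Complex.exp (((π / 2 - α + 4 * t : ℝ) : ℂ) * Complex.I) := by
      rw [← Complex.exp_add]; push_cast; ring_nf
    have e3 : Complex.exp (Complex.I * ((π : ℂ) / 2 - α)) * ((ρ:ℂ) * Complex.exp (Complex.I * α)) =
        ((ρ : ℝ) : ℂ) * Complex.exp (((π / 2 : ℝ) : ℂ) * Complex.I) := by
      rw [mul_comm ((ρ:ℂ)) _, ← mul_assoc, ← Complex.exp_add]; push_cast; ring_nf
    have key : Complex.exp (Complex.I * ((π : ℂ) / 2 - α)) *
        (((D : ℝ) : ℂ) + Complex.exp (4 * Complex.I * t) * ((X : ℝ) : ℂ)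
          + (ρ : ℂ) * Complex.exp (Complex.I * α) * ((J : ℝ) : ℂ))
        = ((D : ℝ) : ℂ) * Complex.exp (((π / 2 - α : ℝ) : ℂ) * Complex.I)
          + ((X : ℝ) : ℂ) * Complex.exp (((π / 2 - α + 4 * t : ℝ) : ℂ) * Complex.I)
          + (((ρ * J : ℝ)) : ℂ) * Complex.exp (((π / 2 : ℝ) : ℂ) * Complex.I) := by
      push_cast at e1 e2 e3 ⊢
      linear_combination ((D : ℝ) : ℂ) * e1 + ((X : ℝ) : ℂ) * e2 + ((J : ℝ) : ℂ) * e3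
    rw [key]
    have hre : (((D : ℝ) : ℂ) * Complex.exp (((π / 2 - α : ℝ) : ℂ) * Complex.I)
          + ((X : ℝ) : ℂ) * Complex.exp (((π / 2 - α + 4 * t : ℝ) : ℂ) * Complex.I)
          + (((ρ * J : ℝ)) : ℂ) * Complex.exp (((π / 2 : ℝ) : ℂ) * Complex.I)).re
        = D * Real.cos (π / 2 - α) + X * Real.cos (π / 2 - α + 4 * t)
          + (ρ * J) * Real.cos (π / 2) := by
      simp only [Complex.add_re, Complex.re_ofReal_mul, Complex.exp_ofReal_mul_I_re]
    rw [hre]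
    have hc1 : Real.cos (π / 2 - α) = Real.sin α := Real.cos_pi_div_two_sub α
    have hc2 : Real.cos (π / 2 - α + 4 * t) = σ := by
      have h' : π / 2 - α + 4 * t = π / 2 - (α - 4 * t) := by ring
      have h'' : α - 4 * t = s + (2 * (k : ℝ) - 1) * t := by rw [hα]; ring
      rw [h', Real.cos_pi_div_two_sub, h'', hσ]
    have hc3 : Real.cos (π / 2) = 0 := Real.cos_pi_div_two
    rw [hc1, hc2, hc3]
    have hsinα : 0 ≤ Real.sin α := le_of_lt (Real.sin_pos_of_pos_of_lt_pi (hα ▸ h1) (hα ▸ h2))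
    nlinarith [mul_nonneg hDpos hsinα]
  · -- X ≥ n² N
    have hmono : ∀ x : ℝ, (n : ℝ) ^ 2 * ‖u x‖ ^ 2 ≤ x ^ 2 * ‖u x‖ ^ 2 := by
      intro x
      by_cases hx : x ∈ Set.Ioo (-(n : ℝ)) (n : ℝ)
      · simp [hvanish x hx]
      · have hx' : (n : ℝ) ≤ |x| := by
          rw [Set.mem_Ioo, not_and_or] at hx
          rcases hx with h | h
          · push_neg at h
            calc (n : ℝ) ≤ -x := by linarith
              _ ≤ |x| := neg_le_abs x
          · push_neg at h
            exact h.trans (le_abs_self x)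
        have hsq : (n : ℝ) ^ 2 ≤ x ^ 2 := by nlinarith [sq_abs x, abs_nonneg x]
        exact mul_le_mul_of_nonneg_right hsq (sq_nonneg _)
    have hXN : (n : ℝ) ^ 2 * ∫ x : ℝ, ‖u x‖ ^ 2 ≤ X := by
      rw [← integral_const_mul]
      exact integral_mono (hIN.const_mul _) hIX hmono
    calc (n : ℝ) ^ 2 * σ * (∫ x : ℝ, ‖u x‖ ^ 2)
        = σ * ((n : ℝ) ^ 2 * ∫ x : ℝ, ‖u x‖ ^ 2) := by ring
      _ ≤ σ * X := mul_le_mul_of_nonneg_left hXN (le_of_lt hσpos)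
end

section
/- Let k ≥ 1 be an integer and s, t ∈ ℝ satisfy 0 < s + (2k+3)t < π and 0 < s + (2k−1)t < π; set α = s + (2k+3)t and let (K(ρ)u)(x) = −u''(x) + e^{4it} x² u(x) + ρ e^{iα} x^{2k+1} u(x) for ρ > 0. Then for every λ ∈ ℂ, every n ≥ 1, and every smooth compactly supported u : ℝ → ℂ vanishing on (−n, n): ‖λ·u − K(ρ)u‖ ≥ ( n²·sin(s + (2k−1)t) − |λ| )·‖u‖, where ‖·‖ is the L² norm on ℝ. In particular, for fixed λ the left-hand side divided by ‖u‖ tends to +∞ as n → ∞, uniformly in ρ > 0. -/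
open MeasureTheory
open scoped Real


private lemma exp_real_mul_I_im' (θ : ℝ) : (Complex.exp ((θ:ℂ) * Complex.I)).im = Real.sin θ := by
  simp [Complex.exp_mul_I, Complex.sin_ofReal_re]

private lemma conj_mul_self_eq (z : ℂ) : (starRingEnd ℂ) z * z = ((‖z‖^2 : ℝ) : ℂ) := by
  rw [mul_comm, Complex.mul_conj]
  simp [Complex.normSq_eq_norm_sq]

set_option maxHeartbeats 1000000

/-- Conclusion of Theorem 2.8(c)(3): for `u` supported outside `(−n, n)`,
`‖(λ − K(ρ))u‖ ≥ (n² sin(s+(2k−1)t) − |λ|)·‖u‖`, uniformly in `ρ > 0`. -/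
theorem localized_resolvent_lower_bound_K
    (k : ℕ) (hk : 1 ≤ k) (s t : ℝ)
    (h1 : 0 < s + (2 * (k : ℝ) + 3) * t) (h2 : s + (2 * (k : ℝ) + 3) * t < π)
    (h3 : 0 < s + (2 * (k : ℝ) - 1) * t) (h4 : s + (2 * (k : ℝ) - 1) * t < π)
    (α : ℝ) (hα : α = s + (2 * (k : ℝ) + 3) * t)
    (ρ : ℝ) (hρ : 0 < ρ) (lam : ℂ) (n : ℕ) (hn : 1 ≤ n)
    (u : ℝ → ℂ) (hu : ContDiff ℝ (⊤ : ℕ∞) u) (hsupp : HasCompactSupport u)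
    (hvanish : ∀ x ∈ Set.Ioo (-(n : ℝ)) (n : ℝ), u x = 0) :
    ((n : ℝ) ^ 2 * Real.sin (s + (2 * (k : ℝ) - 1) * t) - ‖lam‖)
        * Real.sqrt (∫ x : ℝ, ‖u x‖ ^ 2)
      ≤ Real.sqrt (∫ x : ℝ, ‖lam * u x -
          (-(deriv (deriv u) x) + Complex.exp (4 * Complex.I * t) * (x : ℂ) ^ 2 * u x
            + (ρ : ℂ) * Complex.exp (Complex.I * α) * (x : ℂ) ^ (2 * k + 1) * u x)‖ ^ 2) := by
  -- smoothness facts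
  have hu' : ContDiff ℝ (⊤:ℕ∞) u := hu.of_le (by simp)
  have hud : Differentiable ℝ u := hu'.differentiable (by simp)
  have hu1 : ContDiff ℝ (⊤:ℕ∞) (deriv u) := (contDiff_infty_iff_deriv.mp hu').2
  have hu1d : Differentiable ℝ (deriv u) := hu1.differentiable (by simp)
  have huc : Continuous u := hud.continuous
  have hu1c : Continuous (deriv u) := hu1d.continuous
  have hu2c : Continuous (deriv (deriv u)) := ((contDiff_infty_iff_deriv.mp hu1).2).continuous
  have hs1 : HasCompactSupport (deriv u) := hsupp.deriv
  have hs2 : HasCompactSupport (deriv (deriv u)) := hs1.deriv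
  set β : ℝ := s + (2 * (k : ℝ) - 1) * t with hβ
  set c2 : ℂ := Complex.exp (4 * Complex.I * t) with hc2
  set c3 : ℂ := (ρ : ℂ) * Complex.exp (Complex.I * α) with hc3
  set g : ℝ → ℂ := fun x => lam * u x -
      (-(deriv (deriv u) x) + c2 * (x : ℂ) ^ 2 * u x + c3 * (x : ℂ) ^ (2 * k + 1) * u x) with hg
  have hgc : Continuous g := by
    rw [hg]
    exact (continuous_const.mul huc).sub
      (((hu2c.neg).add ((continuous_const.mul (Complex.continuous_ofReal.pow 2)).mul huc)).add
        ((continuous_const.mul (Complex.continuous_ofReal.pow (2*k+1))).mul huc))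
  have hgs : HasCompactSupport g := by
    apply HasCompactSupport.intro (K := tsupport u ∪ tsupport (deriv (deriv u)))
      (hsupp.union hs2)
    intro x hx
    have hxu : u x = 0 :=
      image_eq_zero_of_notMem_tsupport (fun h => hx (Set.mem_union_left _ h))
    have hxu2 : deriv (deriv u) x = 0 :=
      image_eq_zero_of_notMem_tsupport (fun h => hx (Set.mem_union_right _ h))
    simp [hg, hxu, hxu2]
  -- real integrals
  set E0 : ℝ := ∫ x : ℝ, ‖u x‖ ^ 2 with hE0def
  set E1 : ℝ := ∫ x : ℝ, ‖deriv u x‖ ^ 2 with hE1def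
  set E2 : ℝ := ∫ x : ℝ, x ^ 2 * ‖u x‖ ^ 2 with hE2def
  set E3 : ℝ := ∫ x : ℝ, x ^ (2*k+1) * ‖u x‖ ^ 2 with hE3def
  -- integrability
  have i0 : Integrable (fun x : ℝ => ‖u x‖ ^ 2) := by
    apply Continuous.integrable_of_hasCompactSupport
    · fun_prop
    · exact (hsupp.comp_left (g := fun z : ℂ => ‖z‖^2) (by simp) : _)
  have i2 : Integrable (fun x : ℝ => x ^ 2 * ‖u x‖ ^ 2) := by
    apply Continuous.integrable_of_hasCompactSupport
    · fun_prop
    · exact ((hsupp.comp_left (g := fun z : ℂ => ‖z‖^2) (by simp)).mul_left : _)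
  have iB0 : Integrable (fun x : ℝ => (starRingEnd ℂ) (u x) * u x) := by
    apply Continuous.integrable_of_hasCompactSupport
    · exact (Complex.continuous_conj.comp huc).mul huc
    · exact (hsupp.mul_left : _)
  have iB1 : Integrable (fun x : ℝ => (starRingEnd ℂ) (u x) * deriv (deriv u) x) := by
    apply Continuous.integrable_of_hasCompactSupport
    · exact (Complex.continuous_conj.comp huc).mul hu2c
    · exact (hs2.mul_left : _)
  have iB1' : Integrable (fun x : ℝ => (starRingEnd ℂ) (deriv u x) * deriv u x) := by
    apply Continuous.integrable_of_hasCompactSupport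
    · exact (Complex.continuous_conj.comp hu1c).mul hu1c
    · exact (hs1.mul_left : _)
  have iB4 : Integrable (fun x : ℝ => (starRingEnd ℂ) (u x) * deriv u x) := by
    apply Continuous.integrable_of_hasCompactSupport
    · exact (Complex.continuous_conj.comp huc).mul hu1c
    · exact (hs1.mul_left : _)
  have iB2 : Integrable (fun x : ℝ => (x:ℂ) ^ 2 * ((starRingEnd ℂ) (u x) * u x)) := by
    apply Continuous.integrable_of_hasCompactSupport
    · exact (Complex.continuous_ofReal.pow 2).mul ((Complex.continuous_conj.comp huc).mul huc)
    · exact (hsupp.mul_left.mul_left : _)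
  have iB3 : Integrable (fun x : ℝ => (x:ℂ) ^ (2*k+1) * ((starRingEnd ℂ) (u x) * u x)) := by
    apply Continuous.integrable_of_hasCompactSupport
    · exact (Complex.continuous_ofReal.pow (2*k+1)).mul
        ((Complex.continuous_conj.comp huc).mul huc)
    · exact (hsupp.mul_left.mul_left : _)
  -- the inner product
  set Z : ℂ := ∫ x : ℝ, (starRingEnd ℂ) (u x) * g x with hZdef
  -- integration by parts
  have ibp : (∫ x : ℝ, (starRingEnd ℂ) (u x) * deriv (deriv u) x)
      = - ∫ x : ℝ, (starRingEnd ℂ) (deriv u x) * deriv u x := by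
    apply MeasureTheory.integral_mul_deriv_eq_deriv_mul_of_integrable
      (u := fun x => (starRingEnd ℂ) (u x)) (v := deriv u)
      (u' := fun x => (starRingEnd ℂ) (deriv u x)) (v' := deriv (deriv u))
    · intro x _; simpa using ((hud x).hasDerivAt).star
    · intro x _; exact (hu1d x).hasDerivAt
    · exact iB1
    · exact iB1'
    · exact iB4
  have hB0 : (∫ x : ℝ, (starRingEnd ℂ) (u x) * u x) = (E0 : ℂ) := by
    simp_rw [conj_mul_self_eq]; rw [hE0def]; exact integral_ofReal
  have hB1 : (∫ x : ℝ, (starRingEnd ℂ) (u x) * deriv (deriv u) x) = -(E1 : ℂ) := by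
    rw [ibp]; simp_rw [conj_mul_self_eq]; rw [hE1def]
    exact congrArg Neg.neg integral_ofReal
  have hB2 : (∫ x : ℝ, (x:ℂ) ^ 2 * ((starRingEnd ℂ) (u x) * u x)) = (E2 : ℂ) := by
    have e : ∀ x : ℝ, (x:ℂ) ^ 2 * ((starRingEnd ℂ) (u x) * u x)
        = (((x ^ 2 * ‖u x‖ ^ 2 : ℝ)) : ℂ) := fun x => by
      rw [conj_mul_self_eq]; push_cast; ring
    simp_rw [e]; rw [hE2def]; exact integral_ofReal
  have hB3 : (∫ x : ℝ, (x:ℂ) ^ (2*k+1) * ((starRingEnd ℂ) (u x) * u x)) = (E3 : ℂ) := by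
    have e : ∀ x : ℝ, (x:ℂ) ^ (2*k+1) * ((starRingEnd ℂ) (u x) * u x)
        = (((x ^ (2*k+1) * ‖u x‖ ^ 2 : ℝ)) : ℂ) := fun x => by
      rw [conj_mul_self_eq]; push_cast; ring
    simp_rw [e]; rw [hE3def]; exact integral_ofReal
  have hZ : Z = lam * (E0:ℂ) - ((E1:ℂ) + c2 * (E2:ℂ) + c3 * (E3:ℂ)) := by
    rw [hZdef]
    have expand : ∀ x : ℝ, (starRingEnd ℂ) (u x) * g x =
        lam * ((starRingEnd ℂ) (u x) * u x)
        - (-((starRingEnd ℂ) (u x) * deriv (deriv u) x)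
          + c2 * ((x:ℂ) ^ 2 * ((starRingEnd ℂ) (u x) * u x))
          + c3 * ((x:ℂ) ^ (2*k+1) * ((starRingEnd ℂ) (u x) * u x))) := fun x => by
      simp only [hg]; ring
    simp_rw [expand]
    have j1 : Integrable (fun x : ℝ => lam * ((starRingEnd ℂ) (u x) * u x)) :=
      iB0.const_mul lam
    have j5 : Integrable (fun x : ℝ => -((starRingEnd ℂ) (u x) * deriv (deriv u) x)) := by
      exact iB1.neg
    have j6 : Integrable (fun x : ℝ => c2 * ((x:ℂ) ^ 2 * ((starRingEnd ℂ) (u x) * u x))) :=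
      iB2.const_mul c2
    have j7 : Integrable (fun x : ℝ =>
        c3 * ((x:ℂ) ^ (2*k+1) * ((starRingEnd ℂ) (u x) * u x))) := iB3.const_mul c3
    have j3 : Integrable (fun x : ℝ => -((starRingEnd ℂ) (u x) * deriv (deriv u) x)
        + c2 * ((x:ℂ) ^ 2 * ((starRingEnd ℂ) (u x) * u x))) := by exact j5.add j6
    have j2 : Integrable (fun x : ℝ => -((starRingEnd ℂ) (u x) * deriv (deriv u) x)
        + c2 * ((x:ℂ) ^ 2 * ((starRingEnd ℂ) (u x) * u x))
        + c3 * ((x:ℂ) ^ (2*k+1) * ((starRingEnd ℂ) (u x) * u x))) := by exact j3.add j7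
    rw [integral_sub j1 j2, integral_add j3 j7, integral_add j5 j6,
      integral_neg, integral_const_mul, integral_const_mul, integral_const_mul,
      hB0, hB1, hB2, hB3]
    ring
  -- positivity facts
  have hE0 : (0:ℝ) ≤ E0 := by rw [hE0def]; exact integral_nonneg fun x => by positivity
  have hE1 : (0:ℝ) ≤ E1 := by rw [hE1def]; exact integral_nonneg fun x => by positivity
  have hE2 : (n : ℝ) ^ 2 * E0 ≤ E2 := by
    rw [hE0def, hE2def, ← integral_const_mul]
    apply integral_mono (i0.const_mul _) i2
    intro x
    show (n:ℝ) ^ 2 * ‖u x‖ ^ 2 ≤ x ^ 2 * ‖u x‖ ^ 2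
    by_cases hx : u x = 0
    · simp [hx]
    · have hmem : x ∉ Set.Ioo (-(n:ℝ)) (n:ℝ) := fun h => hx (hvanish x h)
      simp only [Set.mem_Ioo, not_and_or, not_lt] at hmem
      have hn2 : (n : ℝ) ^ 2 ≤ x ^ 2 := by
        have hn0 : (0:ℝ) ≤ (n:ℝ) := Nat.cast_nonneg n
        rcases hmem with h | h
        · nlinarith
        · nlinarith
      nlinarith [sq_nonneg ‖u x‖]
  -- the rotation
  set w : ℂ := Complex.exp (((π - α : ℝ) : ℂ) * Complex.I) with hw
  set L : ℂ := w * lam with hLdef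
  have hwim : w.im = Real.sin (π - α) := by rw [hw]; exact exp_real_mul_I_im' _
  have hwnorm : ‖w‖ = 1 := by rw [hw]; exact Complex.norm_exp_ofReal_mul_I _
  have hwc2 : w * c2 = Complex.exp (((π - β : ℝ) : ℂ) * Complex.I) := by
    rw [hw, hc2, ← Complex.exp_add]
    congr 1
    push_cast [hα, hβ]
    ring
  have hwc3 : w * c3 = -(ρ : ℂ) := by
    rw [hw, hc3]
    have e1 : Complex.exp (((π - α : ℝ) : ℂ) * Complex.I) * ((ρ:ℂ) * Complex.exp (Complex.I * α))
        = (ρ:ℂ) * Complex.exp (((π - α : ℝ) : ℂ) * Complex.I + Complex.I * α) := by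
      rw [Complex.exp_add]; ring
    rw [e1]
    have e2 : (((π - α : ℝ) : ℂ)) * Complex.I + Complex.I * (α:ℂ) = (π:ℂ) * Complex.I := by
      push_cast; ring
    rw [e2, Complex.exp_pi_mul_I]; ring
  have him : (w * (-Z)).im = Real.sin (π - α) * E1 + Real.sin (π - β) * E2 - L.im * E0 := by
    have e1 : w * (-Z) = w * (E1:ℂ) + (w * c2) * (E2:ℂ) + (w * c3) * (E3:ℂ) - L * (E0:ℂ) := by
      rw [hZ, hLdef]; ring
    rw [e1, hwc2, hwc3]
    simp only [Complex.add_im, Complex.sub_im, Complex.mul_im, Complex.ofReal_re,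
      Complex.ofReal_im, Complex.neg_im, Complex.neg_re, exp_real_mul_I_im', hwim,
      mul_zero, zero_mul, add_zero, zero_add, neg_zero]
  have hLim : L.im ≤ ‖lam‖ := by
    calc L.im ≤ ‖L‖ := Complex.im_le_norm L
    _ = ‖L‖ := rfl
    _ = ‖w‖ * ‖lam‖ := by rw [hLdef, norm_mul]
    _ = ‖lam‖ := by rw [hwnorm, one_mul]
  have lower : ((n:ℝ) ^ 2 * Real.sin β - ‖lam‖) * E0 ≤ ‖Z‖ := by
    have hsa : 0 ≤ Real.sin α :=
      (Real.sin_pos_of_pos_of_lt_pi (by rw [hα]; exact h1) (by rw [hα]; exact h2)).le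
    have hsb : 0 < Real.sin β := Real.sin_pos_of_pos_of_lt_pi h3 h4
    have step : ((n:ℝ) ^ 2 * Real.sin β - ‖lam‖) * E0 ≤ (w * (-Z)).im := by
      rw [him, Real.sin_pi_sub, Real.sin_pi_sub]
      have t1 : Real.sin β * ((n:ℝ)^2 * E0) ≤ Real.sin β * E2 :=
        mul_le_mul_of_nonneg_left hE2 hsb.le
      have t2 : L.im * E0 ≤ ‖lam‖ * E0 := mul_le_mul_of_nonneg_right hLim hE0
      have t3 : 0 ≤ Real.sin α * E1 := mul_nonneg hsa hE1
      nlinarith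
    calc ((n:ℝ) ^ 2 * Real.sin β - ‖lam‖) * E0 ≤ (w * (-Z)).im := step
    _ ≤ ‖w * (-Z)‖ := Complex.im_le_norm _
    _ = ‖w * (-Z)‖ := rfl
    _ = ‖Z‖ := by rw [norm_mul, hwnorm, one_mul, norm_neg]
  -- Cauchy-Schwarz upper bound
  have hpow2 : ∀ y : ℝ, y ^ (2:ℝ) = y ^ 2 := fun y => by
    rw [show (2:ℝ) = ((2:ℕ):ℝ) by norm_num, Real.rpow_natCast]
  have upper : ‖Z‖ ≤ Real.sqrt (∫ x : ℝ, ‖g x‖ ^ 2) * Real.sqrt E0 := by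
    have mg : MemLp g (ENNReal.ofReal 2) := hgc.memLp_of_hasCompactSupport hgs
    have mu' : MemLp u (ENNReal.ofReal 2) := huc.memLp_of_hasCompactSupport hsupp
    have holder := MeasureTheory.integral_mul_norm_le_Lp_mul_Lq (μ := volume) (p := 2) (q := 2)
      ⟨by norm_num, by norm_num, by norm_num⟩ mg mu'
    simp_rw [hpow2] at holder
    rw [← Real.sqrt_eq_rpow, ← Real.sqrt_eq_rpow] at holder
    have h1 : ‖Z‖ ≤ ∫ x : ℝ, ‖g x‖ * ‖u x‖ := by
      rw [hZdef]
      refine (norm_integral_le_integral_norm _).trans_eq ?_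
      have e : ∀ x : ℝ, ‖(starRingEnd ℂ) (u x) * g x‖ = ‖g x‖ * ‖u x‖ := fun x => by
        rw [norm_mul, RCLike.norm_conj, mul_comm]
      simp_rw [e]
    calc ‖Z‖ ≤ ∫ x : ℝ, ‖g x‖ * ‖u x‖ := h1
    _ ≤ Real.sqrt (∫ x : ℝ, ‖g x‖ ^ 2) * Real.sqrt (∫ x : ℝ, ‖u x‖ ^ 2) := holder
    _ = Real.sqrt (∫ x : ℝ, ‖g x‖ ^ 2) * Real.sqrt E0 := by rw [hE0def]
  have key : ((n:ℝ) ^ 2 * Real.sin β - ‖lam‖) * E0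
      ≤ Real.sqrt (∫ x : ℝ, ‖g x‖ ^ 2) * Real.sqrt E0 := lower.trans upper
  have goal' : ((n:ℝ) ^ 2 * Real.sin β - ‖lam‖) * Real.sqrt E0
      ≤ Real.sqrt (∫ x : ℝ, ‖g x‖ ^ 2) := by
    rcases eq_or_lt_of_le (Real.sqrt_nonneg E0) with h | h
    · rw [← h, mul_zero]; exact Real.sqrt_nonneg _
    · have hms : Real.sqrt E0 * Real.sqrt E0 = E0 := Real.mul_self_sqrt hE0
      apply le_of_mul_le_mul_right _ h
      calc ((n:ℝ) ^ 2 * Real.sin β - ‖lam‖) * Real.sqrt E0 * Real.sqrt E0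
          = ((n:ℝ) ^ 2 * Real.sin β - ‖lam‖) * E0 := by rw [mul_assoc, hms]
        _ ≤ Real.sqrt (∫ x : ℝ, ‖g x‖ ^ 2) * Real.sqrt E0 := key
  simpa only [hg] using goal'
end

section
/- Let g(x) = arctan( x·(1+x²)^{−1/4} ), let η ∈ (0,1), and define f : ℝ → ℂ by f(x) = ( 1 − iη·g'(x) )^{−1}. Then for every x ∈ ℝ: Re( f(x)² ) ≥ (1/4)·( 1 − η²·(1+x²)^{1/2} / ( x² + (1+x²)^{1/2} )² ). -/
/-!
For real `t`, `Re (1 - i t)⁻² = (1 - t²) / (1 + t²)²`, and this is at least `(1 - t²) / 4` for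
every `t`, since numerator and `4 - (1 + t²)²` change sign together at `t² = 1`. With
`r = (1 + x²)^{1/4}` one computes `g'(x) = (1 + x²/2) / (r³ (x² + r²))`, and `1 + x²/2 ≤ r⁴` gives
`g'(x)² ≤ r² / (x² + r²)²`; apply the first bound to `t = η g'(x)`.
-/

open Real

lemma Complex.re_inv_one_sub_I_mul_sq (t : ℝ) :
    (((1 - Complex.I * t)⁻¹) ^ 2).re = (1 - t ^ 2) / (1 + t ^ 2) ^ 2 := by
  rw [inv_pow, Complex.inv_re]
  simp only [sq, mul_re, mul_im, sub_re, sub_im, one_re, one_im, I_re, I_im, ofReal_re, ofReal_im,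
    normSq_apply]
  ring

lemma one_sub_div_four_le_one_sub_div_one_add_sq {a : ℝ} (ha : 0 ≤ a) :
    (1 - a) / 4 ≤ (1 - a) / (1 + a) ^ 2 := by
  rw [div_le_div_iff₀ (by norm_num) (by positivity)]
  nlinarith [sq_nonneg (1 - a)]

lemma quarter_one_sub_le_re_inv_one_sub_I_mul_sq (η t c : ℝ) (h : t ^ 2 ≤ c) :
    1 / 4 * (1 - η ^ 2 * c) ≤ (((1 - Complex.I * η * t)⁻¹) ^ 2).re := by
  rw [mul_assoc, ← Complex.ofReal_mul, Complex.re_inv_one_sub_I_mul_sq]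
  have hηt : (η * t) ^ 2 ≤ η ^ 2 * c := by
    rw [mul_pow]; exact mul_le_mul_of_nonneg_left h (sq_nonneg η)
  calc 1 / 4 * (1 - η ^ 2 * c) ≤ (1 - (η * t) ^ 2) / 4 := by linarith
    _ ≤ _ := one_sub_div_four_le_one_sub_div_one_add_sq (sq_nonneg _)

noncomputable def arctanDistortion (y : ℝ) : ℝ := arctan (y * (1 + y ^ 2) ^ (-(1 / 4 : ℝ)))

lemma hasDerivAt_arctanDistortion {x r : ℝ} (hr : 0 < r) (hr4 : r ^ 4 = 1 + x ^ 2) :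
    HasDerivAt arctanDistortion ((1 + x ^ 2 / 2) / (r ^ 3 * (x ^ 2 + r ^ 2))) x := by
  have hpow (e : ℝ) : (1 + x ^ 2) ^ e = r ^ (4 * e) := by
    rw [← hr4, ← Real.rpow_natCast, ← Real.rpow_mul hr.le]; norm_num
  have hinner := (hasDerivAt_id x).mul
    (((hasDerivAt_pow 2 x).const_add 1).rpow_const (p := -(1 / 4 : ℝ)) (Or.inl (by positivity)))
  refine hinner.arctan.congr_deriv ?_
  simp only [Pi.mul_apply, id, hpow]
  norm_num [Real.rpow_neg_one]
  field_simp
  linear_combination (8 * r ^ 2 + 8 * x ^ 2) * hr4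

lemma sq_deriv_arctanDistortion_le (x : ℝ) :
    deriv arctanDistortion x ^ 2 ≤
      (1 + x ^ 2) ^ (1 / 2 : ℝ) / (x ^ 2 + (1 + x ^ 2) ^ (1 / 2 : ℝ)) ^ 2 := by
  set r := (1 + x ^ 2) ^ (1 / 4 : ℝ)
  have hr : 0 < r := by positivity
  have hpow (n : ℕ) : r ^ n = (1 + x ^ 2) ^ (n / 4 : ℝ) := by
    rw [← Real.rpow_natCast, ← Real.rpow_mul (by positivity)]; ring_nf
  have hr4 : r ^ 4 = 1 + x ^ 2 := by rw [hpow]; norm_num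
  have hsqrt : (1 + x ^ 2) ^ (1 / 2 : ℝ) = r ^ 2 := by rw [hpow]; norm_num
  have hnum : (1 + x ^ 2 / 2) ^ 2 ≤ (r ^ 4) ^ 2 := by rw [hr4]; nlinarith [sq_nonneg x]
  rw [(hasDerivAt_arctanDistortion hr hr4).deriv, hsqrt, div_pow,
    div_le_div_iff₀ (by positivity) (by positivity)]
  calc (1 + x ^ 2 / 2) ^ 2 * (x ^ 2 + r ^ 2) ^ 2 ≤ (r ^ 4) ^ 2 * (x ^ 2 + r ^ 2) ^ 2 := by gcongr
    _ = r ^ 2 * (r ^ 3 * (x ^ 2 + r ^ 2)) ^ 2 := by ring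

theorem re_f_squared_lower_bound_general (η : ℝ) (x : ℝ) :
    (1 / 4) * (1 - η ^ 2 * (1 + x ^ 2) ^ ((1 : ℝ) / 2)
        / (x ^ 2 + (1 + x ^ 2) ^ ((1 : ℝ) / 2)) ^ 2)
      ≤ ((((1 : ℂ) - Complex.I * (η : ℂ) *
          ((deriv (fun y : ℝ => Real.arctan (y * (1 + y ^ 2) ^ (-(1 / 4 : ℝ)))) x : ℝ) : ℂ))⁻¹
            ^ 2).re) := by
  rw [mul_div_assoc]
  exact quarter_one_sub_le_re_inv_one_sub_I_mul_sq _ _ _ (sq_deriv_arctanDistortion_le x)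

/-- Estimate (3.10): real part of `f² = (1 − iη g')^{−2}` where
`g(x) = arctan(x·(1+x²)^{−1/4})` is the complex distortion function. -/
theorem re_f_squared_lower_bound (η : ℝ) (hη : η ∈ Set.Ioo (0 : ℝ) 1) (x : ℝ) :
    (1 / 4) * (1 - η ^ 2 * (1 + x ^ 2) ^ ((1 : ℝ) / 2)
        / (x ^ 2 + (1 + x ^ 2) ^ ((1 : ℝ) / 2)) ^ 2)
      ≤ ((((1 : ℂ) - Complex.I * (η : ℂ) *
          ((deriv (fun y : ℝ => Real.arctan (y * (1 + y ^ 2) ^ (-(1 / 4 : ℝ)))) x : ℝ) : ℂ))⁻¹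
            ^ 2).re) :=
  re_f_squared_lower_bound_general η x
end

section
/- Let g(x) = arctan( x·(1+x²)^{−1/4} ) and for η > 0 define f(x) = ( 1 − iη·g'(x) )^{−1}. Then there exists η₀ ∈ (0,1) such that for every η ∈ (0, η₀] and every x ∈ ℝ: Im( f(x)² ) ≥ η·(1+x²)^{1/4} / ( x² + (1+x²)^{1/2} ). -/
/-!
Put `c = (1 + x²)^{1/4}`, so that `c⁴ = 1 + x²` and the weight is `w = c / (x² + c²)`.
A direct computation gives `g' = (2 + x²) / (2 c³ (x² + c²))` and `Im (1 - i t)⁻² = 2t / (1 + t²)²`.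
For `t = η g'` the relation `2 + x² = 1 + c⁴` turns `η w` into `2t / (1 + c⁻⁴)`, so the estimate
reduces to `(1 + t²)² ≤ 1 + c⁻⁴`. This holds for `η ≤ 1/2`, since then `2t ≤ g' ≤ c⁻²`.
-/

open scoped Real
open Complex

lemma im_inv_one_sub_I_mul_sq (t : ℝ) :
    (((1 : ℂ) - I * t)⁻¹ ^ 2).im = 2 * t / (1 + t ^ 2) ^ 2 := by
  have hnormSq : normSq (1 - I * t) = 1 + t ^ 2 := by
    simp [normSq_apply]; ring
  rw [pow_two, mul_im, inv_im, inv_re, hnormSq]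
  simp only [sub_im, sub_re, one_re, one_im, mul_im, mul_re, I_re, I_im, ofReal_re, ofReal_im]
  field_simp
  ring

lemma Real.rpow_intCast_div_four {a : ℝ} (ha : 0 ≤ a) (n : ℤ) :
    a ^ ((n : ℝ) / 4) = (a ^ (1 / 4 : ℝ)) ^ n := by
  rw [← Real.rpow_mul_intCast ha]; ring_nf

lemma hasDerivAt_arctan_mul_one_add_sq_rpow (x : ℝ) :
    HasDerivAt (fun y : ℝ => Real.arctan (y * (1 + y ^ 2) ^ (-(1 / 4 : ℝ))))
      ((2 + x ^ 2) / (2 * (1 + x ^ 2) ^ (3 / 4 : ℝ) * (x ^ 2 + (1 + x ^ 2) ^ (1 / 2 : ℝ)))) x := by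
  have hs : 0 < 1 + x ^ 2 := by positivity
  have hsq : HasDerivAt (fun y : ℝ => 1 + y ^ 2) (2 * x) x := by
    simpa using (hasDerivAt_pow 2 x).const_add 1
  have hinner := (hasDerivAt_id' x).fun_mul (hsq.rpow_const (p := -(1 / 4 : ℝ)) (Or.inl hs.ne'))
  refine hinner.arctan.congr_deriv ?_
  set c := (1 + x ^ 2) ^ (1 / 4 : ℝ)
  have hc0 : 0 < c := by positivity
  have hpow : ∀ n : ℤ, (1 + x ^ 2) ^ ((n : ℝ) / 4) = c ^ n := Real.rpow_intCast_div_four hs.le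
  have hc4 : c ^ 4 = 1 + x ^ 2 := by have := hpow 4; norm_num at this ⊢; exact this.symm
  rw [show (-(1 / 4 : ℝ)) = ((-1 : ℤ) : ℝ) / 4 by norm_num,
    show ((-1 : ℤ) : ℝ) / 4 - 1 = ((-5 : ℤ) : ℝ) / 4 by norm_num,
    show (3 / 4 : ℝ) = ((3 : ℤ) : ℝ) / 4 by norm_num,
    show (1 / 2 : ℝ) = ((2 : ℤ) : ℝ) / 4 by norm_num, hpow, hpow, hpow, hpow]
  push_cast
  field_simp
  linear_combination 8 * (x ^ 2 + c ^ 2) * hc4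

lemma one_add_sq_sq_le_one_add_sq {t δ : ℝ} (ht : 0 ≤ t) (htδ : 2 * t ≤ δ) (hδ : δ ≤ 1) :
    (1 + t ^ 2) ^ 2 ≤ 1 + δ ^ 2 := by
  have h4t : 4 * t ^ 2 ≤ δ ^ 2 := by nlinarith
  have ht4 : t ^ 2 * t ^ 2 ≤ t ^ 2 * (1 / 4) :=
    mul_le_mul_of_nonneg_left (by nlinarith) (sq_nonneg t)
  nlinarith

lemma mul_div_le_two_mul_div_one_add_sq_sq {c x η t : ℝ} (hc1 : 1 ≤ c) (hc4 : c ^ 4 = 1 + x ^ 2)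
    (hη : 0 < η) (hη2 : η ≤ 1 / 2) (ht : t = η * ((2 + x ^ 2) / (2 * c ^ 3 * (x ^ 2 + c ^ 2)))) :
    η * c / (x ^ 2 + c ^ 2) ≤ 2 * t / (1 + t ^ 2) ^ 2 := by
  have hc0 : 0 < c := by linarith
  have ht0 : 0 ≤ t := by rw [ht]; positivity
  have hg : (2 + x ^ 2) / (2 * c ^ 3 * (x ^ 2 + c ^ 2)) ≤ 1 / c ^ 2 := by
    rw [div_le_div_iff₀ (by positivity) (by positivity)]
    nlinarith [mul_le_mul_of_nonneg_right hc1 (by positivity : 0 ≤ 2 * c ^ 2 * (x ^ 2 + c ^ 2)),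
      mul_le_mul hc1 hc1 zero_le_one (by linarith), sq_nonneg x]
  have h2t : 2 * t ≤ 1 / c ^ 2 := by
    rw [ht]
    nlinarith [mul_le_mul hη2 hg (by positivity) (by norm_num)]
  have hδ : 1 / c ^ 2 ≤ 1 := div_le_one_of_le₀ (one_le_pow₀ hc1) (by positivity)
  calc η * c / (x ^ 2 + c ^ 2) = 2 * t / (1 + (1 / c ^ 2) ^ 2) := by
        rw [ht]; field_simp; linear_combination hc4
    _ ≤ 2 * t / (1 + t ^ 2) ^ 2 := by
        gcongr
        exact one_add_sq_sq_le_one_add_sq ht0 h2t hδ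

/-- Estimate (3.11): for `η` small enough, the imaginary part of
`f² = (1 − iη g')^{−2}` dominates `η·w(x)` with weight
`w(x) = (1+x²)^{1/4}/(x²+(1+x²)^{1/2})`, where `g(x) = arctan(x·(1+x²)^{−1/4})`. -/
theorem im_f_squared_lower_bound :
    ∃ η₀ ∈ Set.Ioo (0 : ℝ) 1, ∀ η : ℝ, 0 < η → η ≤ η₀ → ∀ x : ℝ,
      η * (1 + x ^ 2) ^ ((1 : ℝ) / 4) / (x ^ 2 + (1 + x ^ 2) ^ ((1 : ℝ) / 2))
        ≤ ((((1 : ℂ) - Complex.I * (η : ℂ) *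
            ((deriv (fun y : ℝ => Real.arctan (y * (1 + y ^ 2) ^ (-(1 / 4 : ℝ)))) x : ℝ) : ℂ))⁻¹
              ^ 2).im) := by
  refine ⟨1 / 2, by norm_num, fun η hη hη2 x => ?_⟩
  have hs : 0 ≤ 1 + x ^ 2 := by positivity
  set c := (1 + x ^ 2) ^ (1 / 4 : ℝ)
  have hpow : ∀ n : ℤ, (1 + x ^ 2) ^ ((n : ℝ) / 4) = c ^ n := Real.rpow_intCast_div_four hs
  have hc1 : 1 ≤ c := Real.one_le_rpow (by nlinarith) (by norm_num)
  have hc4 : c ^ 4 = 1 + x ^ 2 := by have := hpow 4; norm_num at this ⊢; exact this.symm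
  have hc2 : (1 + x ^ 2) ^ (1 / 2 : ℝ) = c ^ 2 := by have := hpow 2; norm_num at this ⊢; exact this
  have hc3 : (1 + x ^ 2) ^ (3 / 4 : ℝ) = c ^ 3 := by have := hpow 3; norm_num at this ⊢; exact this
  rw [(hasDerivAt_arctan_mul_one_add_sq_rpow x).deriv, hc2, hc3, mul_assoc I, ← ofReal_mul,
    im_inv_one_sub_I_mul_sq]
  exact mul_div_le_two_mul_div_one_add_sq_sq hc1 hc4 hη hη2 rfl
end
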